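/- arXiv:2305.08054 — 6 statements merged into one kernel-verified Lean document; each statement's English description precedes it below -/
import Mathlib

section
/- Measure-valued weak solutions of the heat equation on the one-dimensional torus are unique: let $T > 0$ and let $W, V : [0,T] \to \mathcal{M}_+(\mathbb{T})$ be two families of finite nonnegative Borel measures on the torus $\mathbb{T} = [0,1)$ such that $\sup_{0 \le s \le T} W_s(\mathbb{T}) < \infty$, $\sup_{0 \le s \le T} V_s(\mathbb{T}) < \infty$, for every $f \in C^\infty(\mathbb{T})$ the maps $s \mapsto W_s(f)$ and $s \mapsto V_s(f)$ are measurable and satisfy $W_t(f) = W_0(f) + \int_0^t W_s(f'')\,ds$ and $V_t(f) = V_0(f) + \int_0^t V_s(f'')\,ds$ for all $t \in [0,T]$, and $W_0 = V_0$. Then $W_t = V_t$ for all $t \in [0,T]$. -/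
open MeasureTheory ENNReal

/-- Integration of a function on the torus (given as a `1`-periodic function on `ℝ`,
evaluated at the canonical representative in `[0,1)`) against a measure on the torus
`AddCircle 1`. -/
noncomputable def torusInt (μ : Measure (AddCircle (1 : ℝ))) (F : ℝ → ℝ) : ℝ :=
  ∫ y, F ((AddCircle.equivIco 1 0 y : Set.Ico (0:ℝ) (0 + 1)) : ℝ) ∂μ

section Aux

open Real


lemma intervalIntegrable_of_bdd {f : ℝ → ℝ} {T M t : ℝ} (hmeas : Measurable f)
    (hbd : ∀ s ∈ Set.Icc (0:ℝ) T, |f s| ≤ M) (ht : t ∈ Set.Icc (0:ℝ) T) :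
    IntervalIntegrable f volume 0 t := by
  rw [intervalIntegrable_iff, Set.uIoc_of_le ht.1]
  apply Integrable.mono' (integrable_const M) (hmeas.aestronglyMeasurable.restrict)
  rw [ae_restrict_iff' measurableSet_Ioc]
  exact Filter.Eventually.of_forall fun s hs => by
    rw [Real.norm_eq_abs]; exact hbd s ⟨hs.1.le, hs.2.trans ht.2⟩

lemma gronwall_zero {T c M : ℝ} {φ : ℝ → ℝ} (hmeas : Measurable φ)
    (hbd : ∀ t ∈ Set.Icc (0:ℝ) T, |φ t| ≤ M)
    (heq : ∀ t ∈ Set.Icc (0:ℝ) T, φ t = c * ∫ s in (0:ℝ)..t, φ s) :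
    ∀ t ∈ Set.Icc (0:ℝ) T, φ t = 0 := by
  intro t ht
  have hT0 : (0:ℝ) ≤ T := le_trans ht.1 ht.2
  have key : ∀ n : ℕ, ∀ u ∈ Set.Icc (0:ℝ) T, |φ u| ≤ M * (|c| * u) ^ n / n.factorial := by
    intro n
    induction n with
    | zero => intro u hu; simpa using hbd u hu
    | succ n IH =>
      intro u hu
      have hu0 : (0:ℝ) ≤ u := hu.1
      have hbd' : ∀ s ∈ Set.Icc (0:ℝ) T, |(|φ s|)| ≤ M := by simpa [abs_abs] using hbd
      have hint1 : IntervalIntegrable (fun s => |φ s|) volume 0 u :=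
        intervalIntegrable_of_bdd hmeas.abs hbd' hu
      have hint2 : IntervalIntegrable (fun s => M * (|c| * s) ^ n / n.factorial) volume 0 u :=
        (Continuous.div_const (continuous_const.mul
          ((continuous_const.mul continuous_id).pow n)) _).intervalIntegrable 0 u
      have h1 : |∫ s in (0:ℝ)..u, φ s| ≤ ∫ s in (0:ℝ)..u, |φ s| := by
        simpa [Real.norm_eq_abs] using
          intervalIntegral.norm_integral_le_integral_norm (f := φ) (a := 0) (b := u) hu0
      have h2 : (∫ s in (0:ℝ)..u, |φ s|) ≤ ∫ s in (0:ℝ)..u, M * (|c| * s) ^ n / n.factorial := by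
        apply intervalIntegral.integral_mono_on hu0 hint1 hint2
        intro s hs
        exact IH s ⟨hs.1, hs.2.trans hu.2⟩
      have h3 : (∫ s in (0:ℝ)..u, M * (|c| * s) ^ n / n.factorial)
          = (M * |c| ^ n / n.factorial) * (u ^ (n+1) / (n+1)) := by
        have : (fun s => M * (|c| * s) ^ n / (n.factorial : ℝ))
            = fun s => (M * |c| ^ n / n.factorial) * s ^ n := by
          funext s; ring
        rw [this, intervalIntegral.integral_const_mul, integral_pow]
        simp
      have hfac : ((n.factorial : ℝ)) ≠ 0 := Nat.cast_ne_zero.2 n.factorial_ne_zero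
      calc |φ u| = |c| * |∫ s in (0:ℝ)..u, φ s| := by rw [heq u hu, abs_mul]
        _ ≤ |c| * ∫ s in (0:ℝ)..u, M * (|c| * s) ^ n / n.factorial := by
            exact mul_le_mul_of_nonneg_left (h1.trans h2) (abs_nonneg c)
        _ = M * (|c| * u) ^ (n+1) / (n+1).factorial := by
            rw [h3, Nat.factorial_succ]
            push_cast
            field_simp
            ring
  have hlim : Filter.Tendsto (fun n : ℕ => M * (|c| * t) ^ n / n.factorial)
      Filter.atTop (nhds 0) := by
    simp only [mul_div_assoc]
    simpa using (FloorSemiring.tendsto_pow_div_factorial_atTop (K := ℝ) (|c| * t)).const_mul M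
  have : |φ t| ≤ 0 := ge_of_tendsto' hlim (fun n => key n t ht)
  exact abs_eq_zero.1 (le_antisymm this (abs_nonneg _))

lemma torusInt_const_mul (μ : Measure (AddCircle (1 : ℝ))) (F : ℝ → ℝ) (b : ℝ) :
    torusInt μ (fun x => b * F x) = b * torusInt μ F := by
  unfold torusInt
  exact integral_const_mul b _

lemma torusInt_bound (μ : Measure (AddCircle (1 : ℝ))) [IsFiniteMeasure μ] {F : ℝ → ℝ}
    (h : ∀ x, |F x| ≤ 1) : |torusInt μ F| ≤ (μ Set.univ).toReal := by
  have := norm_integral_le_of_norm_le_const (μ := μ)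
    (f := fun y => F ((AddCircle.equivIco 1 0 y : Set.Ico (0:ℝ) (0 + 1)) : ℝ)) (C := 1)
    (Filter.Eventually.of_forall fun y => by rw [Real.norm_eq_abs]; exact h _)
  simpa [torusInt, Real.norm_eq_abs, measureReal_def] using this

lemma hasDerivAt_cos_mul (a x : ℝ) :
    HasDerivAt (fun x => Real.cos (a * x)) (-Real.sin (a * x) * a) x :=
  by simpa [mul_one, Function.comp_def] using (Real.hasDerivAt_cos (a * x)).comp x ((hasDerivAt_id x).const_mul a)

lemma hasDerivAt_sin_mul (a x : ℝ) :
    HasDerivAt (fun x => Real.sin (a * x)) (Real.cos (a * x) * a) x :=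
  by simpa [mul_one, Function.comp_def] using (Real.hasDerivAt_sin (a * x)).comp x ((hasDerivAt_id x).const_mul a)

lemma dd_cos (a : ℝ) : deriv (deriv (fun x => Real.cos (a * x)))
    = fun x => (-(a^2)) * Real.cos (a * x) := by
  have h1 : deriv (fun x => Real.cos (a * x)) = fun x => (-a) * Real.sin (a * x) := by
    funext x; rw [(hasDerivAt_cos_mul a x).deriv]; ring
  rw [h1]
  funext x
  rw [deriv_const_mul _ (hasDerivAt_sin_mul a x).differentiableAt,
    (hasDerivAt_sin_mul a x).deriv]
  ring

lemma dd_sin (a : ℝ) : deriv (deriv (fun x => Real.sin (a * x)))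
    = fun x => (-(a^2)) * Real.sin (a * x) := by
  have h1 : deriv (fun x => Real.sin (a * x)) = fun x => a * Real.cos (a * x) := by
    funext x; rw [(hasDerivAt_sin_mul a x).deriv]; ring
  rw [h1]
  funext x
  rw [deriv_const_mul _ (hasDerivAt_cos_mul a x).differentiableAt,
    (hasDerivAt_cos_mul a x).deriv]
  ring

lemma contDiff_cos_mul (a : ℝ) : ContDiff ℝ (⊤ : ℕ∞) (fun x => Real.cos (a * x)) :=
  Real.contDiff_cos.comp (contDiff_const.mul contDiff_id)

lemma contDiff_sin_mul (a : ℝ) : ContDiff ℝ (⊤ : ℕ∞) (fun x => Real.sin (a * x)) :=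
  Real.contDiff_sin.comp (contDiff_const.mul contDiff_id)

lemma periodic_cos_mul (k : ℤ) :
    Function.Periodic (fun x => Real.cos (2 * Real.pi * k * x)) 1 := by
  intro x
  have : 2 * π * k * (x + 1) = 2 * π * k * x + k * (2 * π) := by ring
  simp only []
  rw [this, Real.cos_add_int_mul_two_pi]

lemma periodic_sin_mul (k : ℤ) :
    Function.Periodic (fun x => Real.sin (2 * Real.pi * k * x)) 1 := by
  intro x
  have : 2 * π * k * (x + 1) = 2 * π * k * x + k * (2 * π) := by ring
  simp only []
  rw [this, Real.sin_add_int_mul_two_pi]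
lemma heat_testfun_eq (T : ℝ)
    (W V : ℝ → Measure (AddCircle (1 : ℝ)))
    (hWb : ∃ C : ℝ≥0∞, C ≠ ⊤ ∧ ∀ s ∈ Set.Icc (0 : ℝ) T, W s Set.univ ≤ C)
    (hVb : ∃ C : ℝ≥0∞, C ≠ ⊤ ∧ ∀ s ∈ Set.Icc (0 : ℝ) T, V s Set.univ ≤ C)
    (hWmeas : ∀ F : ℝ → ℝ, ContDiff ℝ (⊤ : ℕ∞) F → Function.Periodic F 1 →
      Measurable fun s => torusInt (W s) F)
    (hVmeas : ∀ F : ℝ → ℝ, ContDiff ℝ (⊤ : ℕ∞) F → Function.Periodic F 1 →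
      Measurable fun s => torusInt (V s) F)
    (hW : ∀ F : ℝ → ℝ, ContDiff ℝ (⊤ : ℕ∞) F → Function.Periodic F 1 → ∀ t ∈ Set.Icc (0 : ℝ) T,
      torusInt (W t) F = torusInt (W 0) F + ∫ s in (0:ℝ)..t, torusInt (W s) (deriv (deriv F)))
    (hV : ∀ F : ℝ → ℝ, ContDiff ℝ (⊤ : ℕ∞) F → Function.Periodic F 1 → ∀ t ∈ Set.Icc (0 : ℝ) T,
      torusInt (V t) F = torusInt (V 0) F + ∫ s in (0:ℝ)..t, torusInt (V s) (deriv (deriv F)))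
    (h0 : W 0 = V 0)
    (F : ℝ → ℝ) (hF : ContDiff ℝ (⊤ : ℕ∞) F) (hFper : Function.Periodic F 1)
    (habs : ∀ x, |F x| ≤ 1) (c' : ℝ) (hdd : deriv (deriv F) = fun x => c' * F x) :
    ∀ t ∈ Set.Icc (0 : ℝ) T, torusInt (W t) F = torusInt (V t) F := by
  obtain ⟨CW, hCWt, hCW⟩ := hWb
  obtain ⟨CV, hCVt, hCV⟩ := hVb
  set φ : ℝ → ℝ := fun s => torusInt (W s) F - torusInt (V s) F with hφ
  have hWbd : ∀ s ∈ Set.Icc (0:ℝ) T, |torusInt (W s) F| ≤ CW.toReal := by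
    intro s hs
    haveI : IsFiniteMeasure (W s) := ⟨(hCW s hs).trans_lt hCWt.lt_top⟩
    exact (torusInt_bound (W s) habs).trans (ENNReal.toReal_mono hCWt (hCW s hs))
  have hVbd : ∀ s ∈ Set.Icc (0:ℝ) T, |torusInt (V s) F| ≤ CV.toReal := by
    intro s hs
    haveI : IsFiniteMeasure (V s) := ⟨(hCV s hs).trans_lt hCVt.lt_top⟩
    exact (torusInt_bound (V s) habs).trans (ENNReal.toReal_mono hCVt (hCV s hs))
  have hbd : ∀ s ∈ Set.Icc (0:ℝ) T, |φ s| ≤ CW.toReal + CV.toReal := fun s hs =>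
    (abs_sub _ _).trans (add_le_add (hWbd s hs) (hVbd s hs))
  have hmeasφ : Measurable φ := (hWmeas F hF hFper).sub (hVmeas F hF hFper)
  have hrw : ∀ μ : Measure (AddCircle (1:ℝ)),
      torusInt μ (deriv (deriv F)) = c' * torusInt μ F := by
    intro μ; rw [hdd]; exact torusInt_const_mul μ F c'
  have heq : ∀ t ∈ Set.Icc (0:ℝ) T, φ t = c' * ∫ s in (0:ℝ)..t, φ s := by
    intro t ht
    have e1 := hW F hF hFper t ht
    have e2 := hV F hF hFper t ht
    simp only [hrw] at e1 e2
    rw [h0] at e1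
    have hiW : IntervalIntegrable (fun s => torusInt (W s) F) volume 0 t :=
      intervalIntegrable_of_bdd (hWmeas F hF hFper) hWbd ht
    have hiV : IntervalIntegrable (fun s => torusInt (V s) F) volume 0 t :=
      intervalIntegrable_of_bdd (hVmeas F hF hFper) hVbd ht
    have : φ t = (∫ s in (0:ℝ)..t, c' * torusInt (W s) F)
        - ∫ s in (0:ℝ)..t, c' * torusInt (V s) F := by
      simp only [hφ, e1, e2]; ring
    rw [this, intervalIntegral.integral_const_mul, intervalIntegral.integral_const_mul,
      ← mul_sub, ← intervalIntegral.integral_sub hiW hiV]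
  intro t ht
  have := gronwall_zero hmeasφ hbd heq t ht
  exact sub_eq_zero.1 this

lemma cont_integrable (μ : Measure (AddCircle (1:ℝ))) [IsFiniteMeasure μ]
    (g : C(AddCircle (1:ℝ), ℂ)) : Integrable g μ := by
  haveI : Fact ((0:ℝ) < 1) := ⟨one_pos⟩
  have := (BoundedContinuousFunction.mkOfCompact g).integrable μ
  exact this

lemma cont_int_continuous (μ : Measure (AddCircle (1:ℝ))) [IsFiniteMeasure μ] :
    Continuous (fun g : C(AddCircle (1:ℝ), ℂ) => ∫ y, g y ∂μ) := by
  haveI : Fact ((0:ℝ) < 1) := ⟨one_pos⟩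
  apply LipschitzWith.continuous (K := (μ Set.univ).toNNReal)
  rw [lipschitzWith_iff_dist_le_mul]
  intro g h
  rw [dist_eq_norm, ← integral_sub (cont_integrable μ g) (cont_integrable μ h)]
  have hb : ‖∫ y, (g y - h y) ∂μ‖ ≤ dist g h * (μ Set.univ).toReal :=
    norm_integral_le_of_norm_le_const (Filter.Eventually.of_forall fun y => by
      rw [← dist_eq_norm]; exact ContinuousMap.dist_apply_le_dist y)
  calc ‖∫ y, (g y - h y) ∂μ‖ ≤ dist g h * (μ Set.univ).toReal := hb
    _ = ((μ Set.univ).toNNReal : ℝ) * dist g h := by rw [mul_comm]; rfl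

lemma measure_ext_of_fourier (μ ν : Measure (AddCircle (1:ℝ)))
    [IsFiniteMeasure μ] [IsFiniteMeasure ν]
    (h : ∀ k : ℤ, (∫ y, fourier k y ∂μ) = ∫ y, fourier k y ∂ν) : μ = ν := by
  haveI : Fact ((0:ℝ) < 1) := ⟨one_pos⟩
  have hcont : ∀ g : C(AddCircle (1:ℝ), ℂ), (∫ y, g y ∂μ) = ∫ y, g y ∂ν := by
    have hS : IsClosed {g : C(AddCircle (1:ℝ), ℂ) | (∫ y, g y ∂μ) = ∫ y, g y ∂ν} :=
      isClosed_eq (cont_int_continuous μ) (cont_int_continuous ν)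
    have hspan : (Submodule.span ℂ (Set.range (@fourier 1)) : Set C(AddCircle (1:ℝ), ℂ))
        ⊆ {g | (∫ y, g y ∂μ) = ∫ y, g y ∂ν} := by
      intro g hg
      induction hg using Submodule.span_induction with
      | mem g hg => obtain ⟨k, rfl⟩ := hg; exact h k
      | zero => simp
      | add g₁ g₂ _ _ h₁ h₂ =>
          simp only [Set.mem_setOf_eq, ContinuousMap.coe_add, Pi.add_apply] at *
          rw [integral_add (cont_integrable μ g₁) (cont_integrable μ g₂),
            integral_add (cont_integrable ν g₁) (cont_integrable ν g₂), h₁, h₂]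
      | smul c g _ hg =>
          simp only [Set.mem_setOf_eq, ContinuousMap.coe_smul, Pi.smul_apply] at *
          rw [integral_smul, integral_smul, hg]
    intro g
    have hgmem : g ∈ closure (Submodule.span ℂ (Set.range (@fourier 1)) :
        Set C(AddCircle (1:ℝ), ℂ)) := by
      rw [← Submodule.topologicalClosure_coe, span_fourier_closure_eq_top]
      trivial
    exact hS.closure_subset_iff.2 hspan hgmem
  apply ext_of_forall_lintegral_eq_of_IsFiniteMeasure
  intro f
  have hfi : ∀ (ρ : Measure (AddCircle (1:ℝ))), IsFiniteMeasure ρ →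
      Integrable (fun y => (f y : ℝ)) ρ := fun ρ hρ => by
    have := (BoundedContinuousFunction.mkOfCompact
      ⟨fun y => ((f y : ℝ)), NNReal.continuous_coe.comp f.continuous⟩).integrable ρ
    exact this
  rw [lintegral_coe_eq_integral f (hfi μ inferInstance), lintegral_coe_eq_integral f
    (hfi ν inferInstance)]
  congr 1
  set g : C(AddCircle (1:ℝ), ℂ) :=
    ⟨fun y => ((f y : ℝ) : ℂ), Complex.continuous_ofReal.comp
      (NNReal.continuous_coe.comp f.continuous)⟩ with hg
  have e : ∀ (ρ : Measure (AddCircle (1:ℝ))) [IsFiniteMeasure ρ],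
      (∫ y, g y ∂ρ).re = ∫ y, (f y : ℝ) ∂ρ := by
    intro ρ _
    rw [← RCLike.re_to_complex, ← integral_re (cont_integrable ρ g)]
    simp [hg]
  rw [← e μ, ← e ν, hcont g]

lemma fourier_re_eq (k : ℤ) (y : AddCircle (1:ℝ)) :
    (fourier k y).re
      = Real.cos (2 * π * k * ((AddCircle.equivIco 1 0 y : Set.Ico (0:ℝ) (0 + 1)) : ℝ)) := by
  haveI : Fact ((0:ℝ) < 1) := ⟨one_pos⟩
  set x : ℝ := ((AddCircle.equivIco 1 0 y : Set.Ico (0:ℝ) (0 + 1)) : ℝ) with hx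
  have hy : ((x : ℝ) : AddCircle (1:ℝ)) = y := (AddCircle.equivIco 1 0).symm_apply_apply y
  rw [← hy, fourier_coe_apply]
  have h2 : 2 * (π:ℂ) * Complex.I * k * x / ((1:ℝ):ℂ)
      = ((2 * π * k * x : ℝ) : ℂ) * Complex.I := by push_cast; ring
  rw [h2, Complex.exp_ofReal_mul_I_re]

lemma fourier_im_eq (k : ℤ) (y : AddCircle (1:ℝ)) :
    (fourier k y).im
      = Real.sin (2 * π * k * ((AddCircle.equivIco 1 0 y : Set.Ico (0:ℝ) (0 + 1)) : ℝ)) := by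
  haveI : Fact ((0:ℝ) < 1) := ⟨one_pos⟩
  set x : ℝ := ((AddCircle.equivIco 1 0 y : Set.Ico (0:ℝ) (0 + 1)) : ℝ) with hx
  have hy : ((x : ℝ) : AddCircle (1:ℝ)) = y := (AddCircle.equivIco 1 0).symm_apply_apply y
  rw [← hy, fourier_coe_apply]
  have h2 : 2 * (π:ℂ) * Complex.I * k * x / ((1:ℝ):ℂ)
      = ((2 * π * k * x : ℝ) : ℂ) * Complex.I := by push_cast; ring
  rw [h2, Complex.exp_ofReal_mul_I_im]

lemma integral_fourier_re (μ : Measure (AddCircle (1:ℝ))) [IsFiniteMeasure μ] (k : ℤ) :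
    (∫ y, fourier k y ∂μ).re = torusInt μ (fun x => Real.cos (2 * Real.pi * k * x)) := by
  rw [← RCLike.re_to_complex, ← integral_re (cont_integrable μ (fourier k))]
  unfold torusInt
  congr 1
  funext y
  rw [RCLike.re_to_complex, fourier_re_eq]

lemma integral_fourier_im (μ : Measure (AddCircle (1:ℝ))) [IsFiniteMeasure μ] (k : ℤ) :
    (∫ y, fourier k y ∂μ).im = torusInt μ (fun x => Real.sin (2 * Real.pi * k * x)) := by
  rw [← RCLike.im_to_complex, ← integral_im (cont_integrable μ (fourier k))]
  unfold torusInt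
  congr 1
  funext y
  rw [RCLike.im_to_complex, fourier_im_eq]

end Aux

/-- measure-valued weak solutions of the heat equation on the one-dimensional
torus are unique. -/
theorem heat_equation_measure_uniqueness (T : ℝ) (hT : 0 < T)
    (W V : ℝ → Measure (AddCircle (1 : ℝ)))
    (hWb : ∃ C : ℝ≥0∞, C ≠ ⊤ ∧ ∀ s ∈ Set.Icc (0 : ℝ) T, W s Set.univ ≤ C)
    (hVb : ∃ C : ℝ≥0∞, C ≠ ⊤ ∧ ∀ s ∈ Set.Icc (0 : ℝ) T, V s Set.univ ≤ C)
    (hWmeas : ∀ F : ℝ → ℝ, ContDiff ℝ (⊤ : ℕ∞) F → Function.Periodic F 1 →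
      Measurable fun s => torusInt (W s) F)
    (hVmeas : ∀ F : ℝ → ℝ, ContDiff ℝ (⊤ : ℕ∞) F → Function.Periodic F 1 →
      Measurable fun s => torusInt (V s) F)
    (hW : ∀ F : ℝ → ℝ, ContDiff ℝ (⊤ : ℕ∞) F → Function.Periodic F 1 → ∀ t ∈ Set.Icc (0 : ℝ) T,
      torusInt (W t) F = torusInt (W 0) F + ∫ s in (0:ℝ)..t, torusInt (W s) (deriv (deriv F)))
    (hV : ∀ F : ℝ → ℝ, ContDiff ℝ (⊤ : ℕ∞) F → Function.Periodic F 1 → ∀ t ∈ Set.Icc (0 : ℝ) T,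
      torusInt (V t) F = torusInt (V 0) F + ∫ s in (0:ℝ)..t, torusInt (V s) (deriv (deriv F)))
    (h0 : W 0 = V 0) :
    ∀ t ∈ Set.Icc (0 : ℝ) T, W t = V t := by
  intro t ht
  obtain ⟨CW, hCWt, hCW⟩ := hWb
  obtain ⟨CV, hCVt, hCV⟩ := hVb
  haveI : IsFiniteMeasure (W t) := ⟨(hCW t ht).trans_lt hCWt.lt_top⟩
  haveI : IsFiniteMeasure (V t) := ⟨(hCV t ht).trans_lt hCVt.lt_top⟩
  apply measure_ext_of_fourier
  intro k
  have hcos := heat_testfun_eq T W V ⟨CW, hCWt, hCW⟩ ⟨CV, hCVt, hCV⟩ hWmeas hVmeas hW hV h0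
    (fun x => Real.cos (2 * Real.pi * k * x)) (contDiff_cos_mul _) (periodic_cos_mul k)
    (fun x => Real.abs_cos_le_one _) (-(2 * Real.pi * k)^2) (dd_cos _) t ht
  have hsin := heat_testfun_eq T W V ⟨CW, hCWt, hCW⟩ ⟨CV, hCVt, hCV⟩ hWmeas hVmeas hW hV h0
    (fun x => Real.sin (2 * Real.pi * k * x)) (contDiff_sin_mul _) (periodic_sin_mul k)
    (fun x => Real.abs_sin_le_one _) (-(2 * Real.pi * k)^2) (dd_sin _) t ht
  apply Complex.ext
  · rw [integral_fourier_re, integral_fourier_re]; exact hcos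
  · rw [integral_fourier_im, integral_fourier_im]; exact hsin
end

section
/- Let $\phi : \mathbb{T} \to (0,1)$ be continuous and let $\nu$ be a finite nonnegative Borel measure on $\mathbb{T}$ with $\nu(\mathbb{T}) \leq 1$. Define $J_{ini}(\nu) = \sup_{f_1, f_2 \in C(\mathbb{T})} \{\nu(f_1 - f_2) + \int_{\mathbb{T}} f_2(u)\,du - \int_{\mathbb{T}} \log(\phi(u)e^{f_1(u)} + (1-\phi(u))e^{f_2(u)})\,du\}$. Then $J_{ini}(\nu) = 0$ if and only if $\nu$ has density $\phi$ with respect to Lebesgue measure, i.e., $\nu(f) = \int_{\mathbb{T}} \phi(u) f(u)\,du$ for every $f \in C(\mathbb{T})$. -/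
open MeasureTheory

private lemma cint {f : AddCircle (1:ℝ) → ℝ} (hf : Continuous f)
    (μ : Measure (AddCircle (1:ℝ))) [IsFiniteMeasure μ] : Integrable f μ :=
  hf.integrable_of_hasCompactSupport (isClosed_tsupport f).isCompact

private lemma point_ineq {a x y : ℝ} (ha : a ∈ Set.Ioo (0:ℝ) 1) :
    a * x + (1 - a) * y ≤ Real.log (a * Real.exp x + (1 - a) * Real.exp y) := by
  have h1 : Real.exp (a*x + (1-a)*y) ≤ a * Real.exp x + (1-a) * Real.exp y := by
    have h := Real.geom_mean_le_arith_mean2_weighted (w₁ := a) (w₂ := 1 - a)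
      (p₁ := Real.exp x) (p₂ := Real.exp y) ha.1.le (by linarith [ha.2])
      (Real.exp_pos x).le (Real.exp_pos y).le (by ring)
    calc Real.exp (a*x+(1-a)*y) = Real.exp x ^ a * Real.exp y ^ (1-a) := by
          rw [Real.exp_add, mul_comm a x, mul_comm (1-a) y, Real.exp_mul, Real.exp_mul]
      _ ≤ _ := h
  calc a*x+(1-a)*y = Real.log (Real.exp (a*x+(1-a)*y)) := (Real.log_exp _).symm
    _ ≤ _ := Real.log_le_log (Real.exp_pos _) h1

private lemma exp_le_quad {x : ℝ} (hx : |x| ≤ 1) : Real.exp x ≤ 1 + x + x^2 := by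
  have h := Real.exp_bound hx (n := 2) (by norm_num)
  have h2 : ∑ m ∈ Finset.range 2, x ^ m / (Nat.factorial m) = 1 + x := by
    simp [Finset.sum_range_succ]
  rw [h2] at h
  have h3 := (abs_le.1 h).2
  norm_num [Nat.factorial] at h3
  nlinarith [sq_abs x, sq_nonneg x]

/-- for a continuous profile `φ : 𝕋 → (0,1)` and a nonnegative measure `ν` on the
torus with `ν(𝕋) ≤ 1`, the Kipnis–Olla–Varadhan initial rate function
`J_ini(ν) = sup_{f₁,f₂ ∈ C(𝕋)} {ν(f₁-f₂) + ∫ f₂ - ∫ log(φ e^{f₁} + (1-φ) e^{f₂})}`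
vanishes if and only if `ν` has density `φ` with respect to Lebesgue measure. -/
theorem Jini_eq_zero_iff (φ : AddCircle (1 : ℝ) → ℝ) (hφc : Continuous φ)
    (hφ : ∀ u, φ u ∈ Set.Ioo (0 : ℝ) 1)
    (ν : Measure (AddCircle (1 : ℝ))) [IsFiniteMeasure ν] (hν : ν Set.univ ≤ 1) :
    (⨆ p : C(AddCircle (1 : ℝ), ℝ) × C(AddCircle (1 : ℝ), ℝ),
        (((∫ u, (p.1 u - p.2 u) ∂ν) + (∫ u, p.2 u)
          - ∫ u, Real.log (φ u * Real.exp (p.1 u) + (1 - φ u) * Real.exp (p.2 u)) : ℝ) : EReal))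
      = 0
    ↔ ∀ f : C(AddCircle (1 : ℝ), ℝ), ∫ u, f u ∂ν = ∫ u, φ u * f u := by
  set T := fun p : C(AddCircle (1 : ℝ), ℝ) × C(AddCircle (1 : ℝ), ℝ) =>
    ((∫ u, (p.1 u - p.2 u) ∂ν) + (∫ u, p.2 u)
      - ∫ u, Real.log (φ u * Real.exp (p.1 u) + (1 - φ u) * Real.exp (p.2 u)) : ℝ) with hT
  have hpos : ∀ (x y : AddCircle (1:ℝ) → ℝ) u,
      0 < φ u * Real.exp (x u) + (1 - φ u) * Real.exp (y u) := by
    intro x y u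
    have e1 := mul_pos (hφ u).1 (Real.exp_pos (x u))
    have e2 := mul_pos (by linarith [(hφ u).2] : (0:ℝ) < 1 - φ u) (Real.exp_pos (y u))
    linarith
  constructor
  · intro hsup
    have hterm : ∀ p, T p ≤ 0 := by
      intro p
      have h := le_iSup (fun p => ((T p : ℝ) : EReal)) p
      rw [hsup] at h
      exact_mod_cast h
    have key : ∀ g : C(AddCircle (1:ℝ), ℝ), ∫ u, g u ∂ν ≤ ∫ u, φ u * g u := by
      intro g
      set C : ℝ := ∫ u, φ u * (g u)^2 with hC
      have hC0 : 0 ≤ C := integral_nonneg fun u => by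
        have := (hφ u).1; positivity
      refine le_of_forall_pos_le_add fun ε hε => ?_
      set t : ℝ := min (1/(‖g‖+1)) (ε/(C+1)) with ht
      have hgnorm : (0:ℝ) < ‖g‖ + 1 := by positivity
      have ht0 : 0 < t := lt_min (by positivity) (by positivity)
      have htg : ∀ u, |t * g u| ≤ 1 := by
        intro u
        have h1 : |g u| ≤ ‖g‖ := ContinuousMap.norm_coe_le_norm g u
        have h2 : t ≤ 1/(‖g‖+1) := min_le_left _ _
        rw [abs_mul, abs_of_pos ht0]
        calc t * |g u| ≤ (1/(‖g‖+1)) * (‖g‖+1) := by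
              apply mul_le_mul h2 (by linarith) (abs_nonneg _) (by positivity)
          _ = 1 := by field_simp
      have h := hterm (t • g, 0)
      simp only [hT] at h
      have e1 : ∫ u, ((t • g : C(AddCircle (1:ℝ), ℝ)) u - (0 : C(AddCircle (1:ℝ), ℝ)) u) ∂ν
          = t * ∫ u, g u ∂ν := by
        simp [integral_const_mul]
      have e2 : ∫ u, (0 : C(AddCircle (1:ℝ), ℝ)) u = (0:ℝ) := by simp
      rw [e1, e2, add_zero] at h
      -- bound the log integral
      have hlogle : ∫ u, Real.log (φ u * Real.exp ((t • g : C(AddCircle (1:ℝ), ℝ)) u)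
            + (1 - φ u) * Real.exp ((0 : C(AddCircle (1:ℝ), ℝ)) u))
          ≤ t * (∫ u, φ u * g u) + t^2 * C := by
        have hmono : ∀ u, Real.log (φ u * Real.exp ((t • g : C(AddCircle (1:ℝ), ℝ)) u)
              + (1 - φ u) * Real.exp ((0 : C(AddCircle (1:ℝ), ℝ)) u))
            ≤ φ u * (t * g u) + φ u * (t * g u)^2 := by
          intro u
          have hpu := hpos (fun u => (t • g : C(AddCircle (1:ℝ), ℝ)) u)
            (fun u => (0 : C(AddCircle (1:ℝ), ℝ)) u) u
          have hlog := Real.log_le_sub_one_of_pos hpu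
          have hq := exp_le_quad (htg u)
          have hφu := (hφ u).1
          simp only [ContinuousMap.smul_apply, ContinuousMap.zero_apply, smul_eq_mul,
            Real.exp_zero, mul_one] at hlog hpu ⊢
          nlinarith [hlog, hq, hφu]
        have hcont : Continuous fun u => Real.log (φ u * Real.exp ((t • g : C(AddCircle (1:ℝ), ℝ)) u)
            + (1 - φ u) * Real.exp ((0 : C(AddCircle (1:ℝ), ℝ)) u)) := by
          apply Continuous.log
          · fun_prop
          · exact fun u => (hpos _ _ u).ne'
        have hcont2 : Continuous fun u => φ u * (t * g u) + φ u * (t * g u)^2 := by fun_prop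
        have hint := integral_mono (cint hcont volume) (cint hcont2 volume) hmono
        refine hint.trans (le_of_eq ?_)
        have : ∫ u, (φ u * (t * g u) + φ u * (t * g u)^2)
            = (∫ u, t * (φ u * g u)) + ∫ u, t^2 * (φ u * (g u)^2) := by
          rw [← integral_add (by apply Integrable.const_mul (cint (by fun_prop) volume))
            (by apply Integrable.const_mul (cint (by fun_prop) volume))]
          congr 1; ext u; ring
        rw [this, integral_const_mul, integral_const_mul, hC]
      have hmain : t * ∫ u, g u ∂ν ≤ t * (∫ u, φ u * g u) + t^2 * C := by linarith
      have htC : t * C ≤ ε := by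
        have h2 : t ≤ ε/(C+1) := min_le_right _ _
        calc t * C ≤ (ε/(C+1)) * (C+1) := by
              apply mul_le_mul h2 (by linarith) hC0 (by positivity)
          _ = ε := by field_simp
      have := (mul_le_mul_iff_right₀ ht0).1 (by nlinarith : t * (∫ u, g u ∂ν) ≤ t * ((∫ u, φ u * g u) + t * C))
      linarith
    intro f
    have h1 := key f
    have h2 := key (-f)
    have e1 : ∫ u, (-f : C(AddCircle (1:ℝ), ℝ)) u ∂ν = - ∫ u, f u ∂ν := by
      simp [integral_neg]
    have e2 : ∫ u, φ u * (-f : C(AddCircle (1:ℝ), ℝ)) u = - ∫ u, φ u * f u := by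
      rw [← integral_neg]; congr 1; ext u
      simp only [ContinuousMap.neg_apply]; ring
    rw [e1, e2] at h2
    linarith
  · intro hdens
    apply le_antisymm
    · apply iSup_le
      intro p
      have hle : T p ≤ 0 := by
        have hν1 : ∫ u, (p.1 u - p.2 u) ∂ν = ∫ u, φ u * (p.1 u - p.2 u) := by
          have := hdens (p.1 - p.2)
          simpa using this
        have hint1 : Integrable (fun u => φ u * (p.1 u - p.2 u)) volume :=
          cint (by fun_prop) volume
        have hint2 : Integrable (fun u => (p.2 u : ℝ)) volume := cint (by fun_prop) volume
        have hcontlog : Continuous fun u => Real.log (φ u * Real.exp (p.1 u)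
            + (1 - φ u) * Real.exp (p.2 u)) := by
          apply Continuous.log
          · fun_prop
          · exact fun u => (hpos _ _ u).ne'
        have hint3 : Integrable (fun u => Real.log (φ u * Real.exp (p.1 u)
            + (1 - φ u) * Real.exp (p.2 u))) volume := cint hcontlog volume
        have hcomb : T p = ∫ u, (φ u * (p.1 u - p.2 u) + p.2 u
            - Real.log (φ u * Real.exp (p.1 u) + (1 - φ u) * Real.exp (p.2 u))) := by
          simp only [hT]
          have hintsum : Integrable (fun u => φ u * (p.1 u - p.2 u) + p.2 u) volume :=
            cint (by fun_prop) volume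
          rw [hν1, ← integral_add hint1 hint2, ← integral_sub hintsum hint3]
        rw [hcomb]
        apply integral_nonpos
        intro u
        have := point_ineq (a := φ u) (x := p.1 u) (y := p.2 u) (hφ u)
        simp only [Pi.zero_apply]
        nlinarith [this]
      calc ((T p : ℝ) : EReal) ≤ ((0:ℝ) : EReal) := by exact_mod_cast hle
        _ = 0 := by norm_num
    · have h0 : T (0, 0) = 0 := by
        simp [hT]
      calc (0 : EReal) = ((T (0,0) : ℝ) : EReal) := by rw [h0]; norm_num
        _ ≤ _ := le_iSup (fun p => ((T p : ℝ) : EReal)) (0,0)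
end

section
/- Under Assumption (A), for every continuous $f : \mathbb{T} \to \mathbb{R}$, $\lim_{N \to \infty} \frac{N}{a_N^2} \log \mathbb{E}\exp\Big(\frac{a_N}{N} \sum_{x \in \mathbb{T}^N} (\eta^N_0(x) - \phi(x/N)) f(x/N)\Big) = \frac{1}{2}\int_{\mathbb{T}} f^2(u)\,\phi(u)(1-\phi(u))\,du$. -/
/-!
Independence turns the log-moment generating function into a sum over the sites of the
cumulant generating functions of the centred Bernoulli variables `(η(x) - φ(x/N)) f(x/N)` at
`t = a_N/N`. Each of them is `t² f² φ(1-φ)/2` up to an error `O(t³)` that is uniform in the site,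
so after multiplication by `N/a_N²` the total error is `O(a_N/N)`, and what remains is a Riemann
sum of `f² φ(1-φ)/2`.
-/

open MeasureTheory ProbabilityTheory Filter Set

lemma abs_exp_sub_quadratic_le {x : ℝ} (hx : |x| ≤ 1) :
    |Real.exp x - (1 + x + x ^ 2 / 2)| ≤ |x| ^ 3 := by
  have h := Real.exp_bound hx (n := 3) (by norm_num)
  norm_num [Finset.sum_range_succ, Nat.factorial] at h
  nlinarith [pow_nonneg (abs_nonneg x) 3]

lemma abs_log_sub_sub_one_le {y : ℝ} (hy : |y - 1| ≤ 1 / 2) :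
    |Real.log y - (y - 1)| ≤ 2 * (y - 1) ^ 2 := by
  have h := Real.abs_log_sub_add_sum_range_le (x := 1 - y) (by rw [abs_sub_comm]; linarith) 1
  rw [abs_sub_comm] at h
  norm_num at h
  calc |Real.log y - (y - 1)| = |1 - y + Real.log y| := by ring_nf
    _ ≤ (y - 1) ^ 2 / (1 - |y - 1|) := h
    _ ≤ 2 * (y - 1) ^ 2 := by
      rw [div_le_iff₀ (by linarith)]
      nlinarith [sq_nonneg (y - 1)]

lemma abs_log_two_point_sub_le {p x₀ x₁ u : ℝ} (hp₀ : 0 ≤ p) (hp₁ : p ≤ 1)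
    (hmean : (1 - p) * x₀ + p * x₁ = 0) (h₀ : |x₀| ≤ u) (h₁ : |x₁| ≤ u) (hu : u ≤ 1 / 2) :
    |Real.log ((1 - p) * Real.exp x₀ + p * Real.exp x₁) - ((1 - p) * x₀ ^ 2 + p * x₁ ^ 2) / 2|
      ≤ 2 * u ^ 3 := by
  set L := (1 - p) * Real.exp x₀ + p * Real.exp x₁
  set q := ((1 - p) * x₀ ^ 2 + p * x₁ ^ 2) / 2
  have hu₀ : 0 ≤ u := (abs_nonneg _).trans h₀
  have hcube : ∀ x, |x| ≤ u → |Real.exp x - (1 + x + x ^ 2 / 2)| ≤ u ^ 3 := fun x hx =>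
    (abs_exp_sub_quadratic_le (by linarith)).trans (pow_le_pow_left₀ (abs_nonneg x) hx 3)
  have hLq : |L - 1 - q| ≤ u ^ 3 := by
    have hsplit : L - 1 - q = (1 - p) * (Real.exp x₀ - (1 + x₀ + x₀ ^ 2 / 2))
        + p * (Real.exp x₁ - (1 + x₁ + x₁ ^ 2 / 2)) := by
      linear_combination hmean
    rw [hsplit]
    refine (abs_add_le _ _).trans ?_
    rw [abs_mul, abs_mul, abs_of_nonneg (by linarith), abs_of_nonneg hp₀]
    nlinarith [hcube x₀ h₀, hcube x₁ h₁]
  have hq : 0 ≤ q ∧ q ≤ u ^ 2 / 2 := by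
    have e₀ : x₀ ^ 2 ≤ u ^ 2 := by rw [← sq_abs]; exact pow_le_pow_left₀ (abs_nonneg _) h₀ 2
    have e₁ : x₁ ^ 2 ≤ u ^ 2 := by rw [← sq_abs]; exact pow_le_pow_left₀ (abs_nonneg _) h₁ 2
    constructor <;> simp only [q] <;> nlinarith [sq_nonneg x₀, sq_nonneg x₁]
  have hL : |L - 1| ≤ u ^ 2 := by
    have := abs_sub_le (L - 1) q 0
    rw [sub_zero, sub_zero, abs_of_nonneg hq.1] at this
    nlinarith
  have hlog := abs_log_sub_sub_one_le (y := L) (by nlinarith)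
  have hL2 : (L - 1) ^ 2 ≤ u ^ 4 := by
    rw [← sq_abs]; nlinarith [abs_nonneg (L - 1)]
  calc |Real.log L - q| ≤ |Real.log L - (L - 1)| + |L - 1 - q| := by
        simpa using abs_add_le (Real.log L - (L - 1)) (L - 1 - q)
    _ ≤ 2 * u ^ 3 := by nlinarith [pow_nonneg hu₀ 3]

/-- The cumulant generating function of `(ξ - p) * c` for `ξ` a Bernoulli(`p`) variable. -/
noncomputable def centredBernoulliCgf (p c t : ℝ) : ℝ :=
  Real.log ((1 - p) * Real.exp (t * (-p * c)) + p * Real.exp (t * ((1 - p) * c)))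

lemma abs_centredBernoulliCgf_sub_le {p c t : ℝ} (hp₀ : 0 ≤ p) (hp₁ : p ≤ 1)
    (htc : |t * c| ≤ 1 / 2) :
    |centredBernoulliCgf p c t - t ^ 2 / 2 * (c ^ 2 * (p * (1 - p)))| ≤ 2 * |t * c| ^ 3 := by
  have hbound : ∀ r, |r| ≤ 1 → |t * (r * c)| ≤ |t * c| := fun r hr => by
    rw [mul_left_comm, abs_mul]
    exact mul_le_of_le_one_left (abs_nonneg _) hr
  have h := abs_log_two_point_sub_le hp₀ hp₁ (by ring)
    (hbound (-p) (by rw [abs_neg, abs_of_nonneg hp₀]; exact hp₁))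
    (hbound (1 - p) (by rw [abs_of_nonneg (by linarith)]; linarith)) htc
  unfold centredBernoulliCgf
  convert h using 3
  ring

lemma abs_sum_centredBernoulliCgf_sub_le {ι : Type*} [Fintype ι] {p c : ι → ℝ} {M t : ℝ}
    (hp : ∀ i, p i ∈ Icc 0 1) (hc : ∀ i, |c i| ≤ M) (ht : |t| * M ≤ 1 / 2) :
    |∑ i, centredBernoulliCgf (p i) (c i) t - t ^ 2 / 2 * ∑ i, c i ^ 2 * (p i * (1 - p i))|
      ≤ Fintype.card ι * (2 * (|t| * M) ^ 3) := by
  have hsite : ∀ i, |t * c i| ≤ |t| * M := fun i => by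
    rw [abs_mul]; exact mul_le_mul_of_nonneg_left (hc i) (abs_nonneg t)
  rw [Finset.mul_sum, ← Finset.sum_sub_distrib]
  calc _ ≤ ∑ i, |centredBernoulliCgf (p i) (c i) t - t ^ 2 / 2 * (c i ^ 2 * (p i * (1 - p i)))| :=
        Finset.abs_sum_le_sum_abs _ _
    _ ≤ ∑ _i : ι, 2 * (|t| * M) ^ 3 := Finset.sum_le_sum fun i _ => by
        refine (abs_centredBernoulliCgf_sub_le (hp i).1 (hp i).2 ((hsite i).trans ht)).trans ?_
        gcongr
        exact hsite i
    _ = _ := by simp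

lemma comp_eq_const_add_indicator_of_eq_zero_or_eq_one {Ω : Type*} {X : Ω → ℝ}
    (hval : ∀ ω, X ω = 0 ∨ X ω = 1) (g : ℝ → ℝ) :
    (fun ω => g (X ω)) = fun ω => g 0 + {ω | X ω = 1}.indicator (fun _ => g 1 - g 0) ω := by
  funext ω
  rcases hval ω with h | h <;> simp [h]

section ZeroOneValued

variable {Ω : Type*} [MeasurableSpace Ω] {P : Measure Ω} {X : Ω → ℝ}

lemma integrable_comp_of_eq_zero_or_eq_one [IsFiniteMeasure P] (hX : Measurable X)
    (hval : ∀ ω, X ω = 0 ∨ X ω = 1) (g : ℝ → ℝ) : Integrable (fun ω => g (X ω)) P := by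
  rw [comp_eq_const_add_indicator_of_eq_zero_or_eq_one hval]
  exact (integrable_const _).add ((integrable_const _).indicator (hX (measurableSet_singleton 1)))

lemma integral_comp_of_eq_zero_or_eq_one [IsProbabilityMeasure P] (hX : Measurable X)
    (hval : ∀ ω, X ω = 0 ∨ X ω = 1) {p : ℝ} (hp : 0 ≤ p)
    (hmarg : P {ω | X ω = 1} = ENNReal.ofReal p) (g : ℝ → ℝ) :
    ∫ ω, g (X ω) ∂P = (1 - p) * g 0 + p * g 1 := by
  have hs : MeasurableSet {ω | X ω = 1} := hX (measurableSet_singleton 1)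
  rw [comp_eq_const_add_indicator_of_eq_zero_or_eq_one hval,
    integral_add (integrable_const _) ((integrable_const _).indicator hs), integral_const,
    integral_indicator_const _ hs, probReal_univ, measureReal_def, hmarg,
    ENNReal.toReal_ofReal hp, smul_eq_mul, smul_eq_mul]
  ring

lemma log_integral_exp_sum_eq_sum_centredBernoulliCgf [IsProbabilityMeasure P]
    {ι : Type*} [Fintype ι] {η : ι → Ω → ℝ} (hmeas : ∀ i, Measurable (η i))
    (hval : ∀ i ω, η i ω = 0 ∨ η i ω = 1) (hind : iIndepFun η P) {p : ι → ℝ}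
    (hp : ∀ i, 0 ≤ p i) (hmarg : ∀ i, P {ω | η i ω = 1} = ENNReal.ofReal (p i))
    (c : ι → ℝ) (t : ℝ) :
    Real.log (∫ ω, Real.exp (t * ∑ i, (η i ω - p i) * c i) ∂P)
      = ∑ i, centredBernoulliCgf (p i) (c i) t := by
  set Y : ι → Ω → ℝ := fun i ω => (η i ω - p i) * c i
  have hY : iIndepFun Y P :=
    hind.comp (fun i v => (v - p i) * c i) fun i => (measurable_id.sub_const _).mul_const _
  have hcgf := hY.cgf_sum (t := t) (s := Finset.univ)
    (fun i => ((hmeas i).sub_const _).mul_const _)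
    fun i _ => integrable_comp_of_eq_zero_or_eq_one (hmeas i) (hval i)
      fun v => Real.exp (t * ((v - p i) * c i))
  have hsum : (fun ω => Real.exp (t * ∑ i, (η i ω - p i) * c i))
      = fun ω => Real.exp (t * (∑ i, Y i) ω) := by
    simp only [Finset.sum_apply, Y]
  rw [hsum]
  refine hcgf.trans (Finset.sum_congr rfl fun i _ => ?_)
  rw [cgf, mgf, integral_comp_of_eq_zero_or_eq_one (hmeas i) (hval i) (hp i) (hmarg i)
    (fun v => Real.exp (t * ((v - p i) * c i)))]
  simp [centredBernoulliCgf]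

end ZeroOneValued

lemma abs_sum_range_div_sub_integral_le {G : ℝ → ℝ} (hG : Continuous G) {N : ℕ} (hN : 0 < N)
    {ε : ℝ} (hε : ∀ x ∈ Icc (0 : ℝ) 1, ∀ y ∈ Icc (0 : ℝ) 1, |x - y| ≤ 1 / N → |G x - G y| ≤ ε) :
    |(∑ k ∈ Finset.range N, G (k / N)) / N - ∫ u in (0 : ℝ)..1, G u| ≤ ε := by
  have hN' : (0 : ℝ) < N := Nat.cast_pos.mpr hN
  have hcells : ∫ u in (0 : ℝ)..1, G u
      = ∑ k ∈ Finset.range N, ∫ u in (k / N : ℝ)..((k + 1 : ℕ) / N : ℝ), G u := by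
    rw [intervalIntegral.sum_integral_adjacent_intervals fun k _ => hG.intervalIntegrable _ _]
    simp [hN'.ne']
  have hcell : ∀ k ∈ Finset.range N,
      |G (k / N) / N - ∫ u in (k / N : ℝ)..((k + 1 : ℕ) / N : ℝ), G u| ≤ ε / N := by
    intro k hk
    have hk : (k + 1 : ℝ) ≤ N := by exact_mod_cast Finset.mem_range.mp hk
    have hlen : ((k + 1 : ℕ) / N : ℝ) - k / N = 1 / N := by push_cast; field_simp; ring
    have hle : (k / N : ℝ) ≤ (k + 1 : ℕ) / N := by linarith [div_pos one_pos hN']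
    rw [show G (k / N) / N = ∫ _ in (k / N : ℝ)..((k + 1 : ℕ) / N : ℝ), G (k / N) by
        rw [intervalIntegral.integral_const, hlen, smul_eq_mul]; ring,
      ← intervalIntegral.integral_sub intervalIntegrable_const (hG.intervalIntegrable _ _)]
    refine (intervalIntegral.norm_integral_le_of_norm_le_const (f := fun u => G (k / N) - G u)
      (C := ε) fun x hx => ?_).trans_eq
      (by rw [hlen, abs_of_pos (by positivity)]; ring)
    rw [uIoc_of_le hle] at hx
    have hk0 : (0 : ℝ) ≤ k / N := by positivity
    have hxN : x ≤ 1 := hx.2.trans (by rw [div_le_one hN']; push_cast; exact hk)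
    exact hε _ ⟨hk0, by linarith [hx.1]⟩ _ ⟨by linarith [hx.1], hxN⟩
      (by rw [abs_sub_comm, abs_of_nonneg (by linarith [hx.1])]; linarith [hx.2])
  rw [hcells, Finset.sum_div, ← Finset.sum_sub_distrib]
  calc _ ≤ ∑ k ∈ Finset.range N,
        |G (k / N) / N - ∫ u in (k / N : ℝ)..((k + 1 : ℕ) / N : ℝ), G u| :=
        Finset.abs_sum_le_sum_abs _ _
    _ ≤ ∑ _k ∈ Finset.range N, ε / N := Finset.sum_le_sum hcell
    _ = ε := by rw [Finset.sum_const, Finset.card_range, nsmul_eq_mul]; field_simp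

lemma tendsto_sum_range_div_integral {G : ℝ → ℝ} (hG : Continuous G) :
    Tendsto (fun N : ℕ => (∑ k ∈ Finset.range N, G (k / N)) / N) atTop
      (nhds (∫ u in (0 : ℝ)..1, G u)) := by
  rw [Metric.tendsto_atTop]
  intro ε hε
  obtain ⟨δ, hδ, hG'⟩ := Metric.uniformContinuousOn_iff.mp
    (isCompact_Icc.uniformContinuousOn_of_continuous hG.continuousOn) (ε / 2) (half_pos hε)
  obtain ⟨N₀, hN₀⟩ := exists_nat_gt (1 / δ)
  refine ⟨N₀ + 1, fun N hN => ?_⟩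
  have hN' : (N₀ : ℝ) + 1 ≤ N := by exact_mod_cast hN
  have hδN : 1 / (N : ℝ) < δ := by
    rw [div_lt_iff₀ (by linarith [N₀.cast_nonneg (α := ℝ)])]
    rw [div_lt_iff₀ hδ] at hN₀
    nlinarith
  rw [Real.dist_eq]
  refine (abs_sum_range_div_sub_integral_le hG (by omega) fun x hx y hy hxy => ?_).trans_lt
    (half_lt_self hε)
  exact (hG' x hx y hy ((Real.dist_eq x y).trans_le hxy |>.trans_lt hδN)).le

theorem initial_field_logMGF_limit_general
    {Ω : Type*} [MeasurableSpace Ω] (P : Measure Ω) [IsProbabilityMeasure P]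
    (a : ℕ → ℝ) (ha : ∀ N, 0 < a N)
    (ha1 : Tendsto (fun N : ℕ => a N / (N : ℝ)) atTop (nhds 0))
    (φ : ℝ → ℝ) (hφc : Continuous φ)
    (hφ : ∀ u, φ u ∈ Set.Ioo (0 : ℝ) 1)
    (η : (N : ℕ) → Fin N → Ω → ℝ)
    (hmeas : ∀ N x, Measurable (η N x))
    (hval : ∀ N x ω, η N x ω = 0 ∨ η N x ω = 1)
    (hind : ∀ N, iIndepFun (η N) P)
    (hmarg : ∀ N (x : Fin N), P {ω | η N x ω = 1} = ENNReal.ofReal (φ (x / N)))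
    (f : ℝ → ℝ) (hfc : Continuous f) :
    Tendsto (fun N : ℕ =>
        ((N : ℝ) / (a N) ^ 2) * Real.log (∫ ω,
          Real.exp ((a N / N) * ∑ x : Fin N, (η N x ω - φ (x / N)) * f (x / N)) ∂P))
      atTop (nhds ((1 / 2) * ∫ u in (0:ℝ)..1, f u ^ 2 * (φ u * (1 - φ u)))) := by
  obtain ⟨M, hM⟩ := (isCompact_Icc (a := (0 : ℝ)) (b := 1)).exists_bound_of_continuousOn
    hfc.continuousOn
  set G : ℝ → ℝ := fun u => f u ^ 2 * (φ u * (1 - φ u))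
  have hriemann := (tendsto_sum_range_div_integral (G := G) (by fun_prop)).const_mul (1 / 2)
  have hsmall : ∀ᶠ N : ℕ in atTop, |a N / N| * M ≤ 1 / 2 := by
    have h := ha1.abs.mul_const M
    rw [abs_zero, zero_mul] at h
    exact h.eventually (ge_mem_nhds (by norm_num))
  have herror : ∀ᶠ N : ℕ in atTop,
      ‖((N : ℝ) / (a N) ^ 2) * Real.log (∫ ω,
          Real.exp ((a N / N) * ∑ x : Fin N, (η N x ω - φ (x / N)) * f (x / N)) ∂P)
        - (1 / 2) * ((∑ k ∈ Finset.range N, G (k / N)) / N)‖ ≤ 2 * M ^ 3 * (a N / N) := by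
    filter_upwards [hsmall, eventually_gt_atTop 0] with N hN hN₀
    have hN' : (0 : ℝ) < N := Nat.cast_pos.mpr hN₀
    have ht : 0 < a N / N := div_pos (ha N) hN'
    have haN : a N ≠ 0 := (ha N).ne'
    rw [log_integral_exp_sum_eq_sum_centredBernoulliCgf (hmeas N) (hval N) (hind N)
      (fun x => (hφ _).1.le) (hmarg N) (fun x : Fin N => f (x / N))]
    have hbound := abs_sum_centredBernoulliCgf_sub_le (p := fun x : Fin N => φ (x / N))
      (c := fun x : Fin N => f (x / N))
      (fun x => Ioo_subset_Icc_self (hφ _))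
      (fun x => (Real.norm_eq_abs _).symm.trans_le (hM _ ⟨by positivity,
        div_le_one_of_le₀ (by exact_mod_cast x.isLt.le) hN'.le⟩)) hN
    rw [abs_of_pos ht, Fintype.card_fin] at hbound
    rw [← Fin.sum_univ_eq_sum_range (fun k : ℕ => G (k / N)) N]
    have hG : (1 / 2) * ((∑ x : Fin N, G (x / N)) / N)
        = N / a N ^ 2 * ((a N / N) ^ 2 / 2 * ∑ x : Fin N, G (x / N)) := by
      field_simp
    rw [hG, ← mul_sub, Real.norm_eq_abs, abs_mul, abs_of_pos (div_pos hN' (pow_pos (ha N) 2))]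
    calc _ ≤ N / a N ^ 2 * (N * (2 * (a N / N * M) ^ 3)) := by gcongr
      _ = 2 * M ^ 3 * (a N / N) := by field_simp
  have hlim := squeeze_zero_norm' herror (by simpa using ha1.const_mul (2 * M ^ 3))
  simpa using hlim.add hriemann

/-- under Assumption (A) (independent Bernoulli initial data with slowly varying
profile `φ`), for every continuous (`1`-periodic) `f`, the scaled log-moment generating
function of the initial density field converges:
`(N/a_N²) log E exp((a_N/N) ∑_x (η₀^N(x) - φ(x/N)) f(x/N)) → ½ ∫ f² φ(1-φ)`. -/
theorem initial_field_logMGF_limit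
    {Ω : Type*} [MeasurableSpace Ω] (P : Measure Ω) [IsProbabilityMeasure P]
    (a : ℕ → ℝ) (ha : ∀ N, 0 < a N)
    (ha1 : Tendsto (fun N : ℕ => a N / (N : ℝ)) atTop (nhds 0))
    (ha2 : Tendsto (fun N : ℕ => Real.sqrt N / a N) atTop (nhds 0))
    (φ : ℝ → ℝ) (hφc : Continuous φ) (hφp : Function.Periodic φ 1)
    (hφ : ∀ u, φ u ∈ Set.Ioo (0 : ℝ) 1)
    (η : (N : ℕ) → Fin N → Ω → ℝ)
    (hmeas : ∀ N x, Measurable (η N x))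
    (hval : ∀ N x ω, η N x ω = 0 ∨ η N x ω = 1)
    (hind : ∀ N, iIndepFun (η N) P)
    (hmarg : ∀ N (x : Fin N), P {ω | η N x ω = 1} = ENNReal.ofReal (φ (x / N)))
    (f : ℝ → ℝ) (hfc : Continuous f) (hfp : Function.Periodic f 1) :
    Tendsto (fun N : ℕ =>
        ((N : ℝ) / (a N) ^ 2) * Real.log (∫ ω,
          Real.exp ((a N / N) * ∑ x : Fin N, (η N x ω - φ (x / N)) * f (x / N)) ∂P))
      atTop (nhds ((1 / 2) * ∫ u in (0:ℝ)..1, f u ^ 2 * (φ u * (1 - φ u)))) :=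
  initial_field_logMGF_limit_general P a ha ha1 φ hφc hφ η hmeas hval hind hmarg f hfc
end

section
/- Under Assumption (A), for every continuous $f : \mathbb{T} \to \mathbb{R}$ that is not identically zero and every $a > 0$, $\limsup_{N \to \infty} \frac{N}{a_N^2} \log P\big(\theta^N_0(f) \geq a\big) \leq -\frac{a^2}{2\sigma^2(f)}$, where $\sigma^2(f) = \int_{\mathbb{T}} f^2(u)\,\phi(u)(1-\phi(u))\,du > 0$. -/
open MeasureTheory ProbabilityTheory Filter

lemma exp_taylor3 {x : ℝ} (hx : |x| ≤ 1) :
    Real.exp x ≤ 1 + x + x ^ 2 / 2 + |x| ^ 3 := by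
  have h := Real.exp_bound hx (n := 3) (by norm_num)
  have h2 : ∑ m ∈ Finset.range 3, x ^ m / m.factorial = 1 + x + x ^ 2 / 2 := by
    simp [Finset.sum_range_succ, Nat.factorial]
  rw [h2] at h
  have h4 : ((Nat.succ 3 : ℕ) : ℝ) / ((Nat.factorial 3 : ℕ) * (3:ℕ)) = 2/9 := by
    norm_num [Nat.factorial]
  rw [h4] at h
  have := (abs_sub_le_iff.1 h).1
  have h3 : (0:ℝ) ≤ |x| ^ 3 := by positivity
  nlinarith [this]

lemma bern_bound {p c : ℝ} (hp0 : 0 ≤ p) (hp1 : p ≤ 1) (hc : |c| ≤ 1) :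
    p * Real.exp (c * (1 - p)) + (1 - p) * Real.exp (-(c * p))
      ≤ Real.exp (p * (1 - p) * c ^ 2 / 2 + 2 * |c| ^ 3) := by
  have hc0 : 0 ≤ |c| := abs_nonneg c
  have hx1 : |c * (1 - p)| ≤ 1 := by
    rw [abs_mul, abs_of_nonneg (by linarith : (0:ℝ) ≤ 1 - p)]
    nlinarith
  have hx2 : |-(c * p)| ≤ 1 := by
    rw [abs_neg, abs_mul, abs_of_nonneg hp0]; nlinarith
  have e1 := exp_taylor3 hx1
  have e2 := exp_taylor3 hx2
  have a1 : |c * (1 - p)| ^ 3 = |c| ^ 3 * (1 - p) ^ 3 := by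
    rw [abs_mul, abs_of_nonneg (by linarith : (0:ℝ) ≤ 1 - p)]; ring
  have a2 : |-(c * p)| ^ 3 = |c| ^ 3 * p ^ 3 := by
    rw [abs_neg, abs_mul, abs_of_nonneg hp0]; ring
  rw [a1] at e1; rw [a2] at e2
  have key : p * Real.exp (c * (1 - p)) + (1 - p) * Real.exp (-(c * p))
      ≤ 1 + (p * (1 - p) * c ^ 2 / 2 + 2 * |c| ^ 3) := by
    have c3 : |c| ^ 3 * (p * (1 - p) ^ 3 + (1 - p) * p ^ 3) ≤ 2 * |c| ^ 3 := by
      have hq0 : (0:ℝ) ≤ 1 - p := by linarith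
      have hb : p * (1 - p) ^ 3 + (1 - p) * p ^ 3 ≤ 2 := by
        have h1 : p * (1 - p) ^ 3 ≤ 1 :=
          mul_le_one₀ hp1 (pow_nonneg hq0 3) (pow_le_one₀ hq0 (by linarith))
        have h2 : (1 - p) * p ^ 3 ≤ 1 :=
          mul_le_one₀ (by linarith) (pow_nonneg hp0 3) (pow_le_one₀ hp0 hp1)
        linarith
      have hb0 : 0 ≤ p * (1 - p) ^ 3 + (1 - p) * p ^ 3 := by
        have := mul_nonneg hp0 (pow_nonneg hq0 3)
        have := mul_nonneg hq0 (pow_nonneg hp0 3)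
        linarith
      nlinarith [pow_nonneg hc0 3]
    nlinarith [Real.exp_pos (c * (1 - p)), Real.exp_pos (-(c * p))]
  calc p * Real.exp (c * (1 - p)) + (1 - p) * Real.exp (-(c * p))
      ≤ 1 + (p * (1 - p) * c ^ 2 / 2 + 2 * |c| ^ 3) := key
    _ ≤ Real.exp (p * (1 - p) * c ^ 2 / 2 + 2 * |c| ^ 3) := by
        rw [add_comm]; exact Real.add_one_le_exp _

lemma riemann_tendsto {g : ℝ → ℝ} (hg : Continuous g) :
    Tendsto (fun N : ℕ => (1 / (N:ℝ)) * ∑ x : Fin N, g ((x:ℝ) / (N:ℝ))) atTop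
      (nhds (∫ u in (0:ℝ)..1, g u)) := by
  rw [Metric.tendsto_atTop]
  intro ε hε
  obtain ⟨δ, hδ, H⟩ := Metric.uniformContinuousOn_iff.mp
    ((isCompact_Icc (a := (0:ℝ)) (b := 1)).uniformContinuousOn_of_continuous hg.continuousOn)
    (ε/2) (half_pos hε)
  obtain ⟨N₀, hN₀⟩ := exists_nat_gt (1/δ)
  refine ⟨max N₀ 1, fun N hN => ?_⟩
  have hN1 : 1 ≤ N := le_trans (le_max_right _ _) hN
  have hNpos : (0:ℝ) < N := by exact_mod_cast hN1
  have hN₀' : 1/δ < (N:ℝ) :=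
    lt_of_lt_of_le hN₀ (by exact_mod_cast le_trans (le_max_left _ _) hN)
  have hNδ : 1 / (N:ℝ) < δ := by
    rw [div_lt_iff₀ hNpos]
    have := (div_lt_iff₀ hδ).mp hN₀'
    linarith
  set a : ℕ → ℝ := fun i => (i:ℝ) / N with ha
  have hint : ∀ k, k < N → IntervalIntegrable g volume (a k) (a (k+1)) :=
    fun k _ => hg.intervalIntegrable _ _
  have hsplit : (∫ u in (0:ℝ)..1, g u) = ∑ i ∈ Finset.range N, ∫ u in a i..a (i+1), g u := by
    rw [intervalIntegral.sum_integral_adjacent_intervals hint]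
    have h0 : a 0 = 0 := by simp [ha]
    have h1 : a N = 1 := by rw [ha]; exact div_self hNpos.ne'
    rw [h0, h1]
  have hsum : (1 / (N:ℝ)) * ∑ x : Fin N, g ((x:ℝ) / (N:ℝ))
      = ∑ i ∈ Finset.range N, (1 / (N:ℝ)) * g ((i:ℝ)/(N:ℝ)) := by
    rw [Finset.mul_sum, Fin.sum_univ_eq_sum_range (fun i => (1 / (N:ℝ)) * g ((i:ℝ)/(N:ℝ)))]
  rw [dist_eq_norm, hsum, hsplit, ← Finset.sum_sub_distrib]
  have hterm : ∀ i ∈ Finset.range N,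
      ‖(1/(N:ℝ)) * g ((i:ℝ)/(N:ℝ)) - ∫ u in a i..a (i+1), g u‖ ≤ ε/2 * (1/N) := by
    intro i hi
    have hiN : (i:ℝ) < N := by exact_mod_cast Finset.mem_range.mp hi
    have hi1N : ((i:ℝ)+1) ≤ N := by
      have : (i+1 : ℕ) ≤ N := Finset.mem_range.mp hi
      exact_mod_cast this
    have hdiff : a (i+1) - a i = 1/N := by
      simp only [ha]; push_cast; field_simp; ring
    have hle : a i ≤ a (i+1) := by linarith [hdiff, one_div_pos.mpr hNpos]
    have hconst : (1/(N:ℝ)) * g ((i:ℝ)/(N:ℝ)) = ∫ _ in a i..a (i+1), g ((i:ℝ)/(N:ℝ)) := by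
      rw [intervalIntegral.integral_const, hdiff, smul_eq_mul]
    rw [hconst, ← intervalIntegral.integral_sub (intervalIntegrable_const)
      (hint i (Finset.mem_range.mp hi))]
    have hbd : ∀ u ∈ Set.uIoc (a i) (a (i+1)), ‖g ((i:ℝ)/(N:ℝ)) - g u‖ ≤ ε/2 := by
      intro u hu
      rw [Set.uIoc_of_le hle] at hu
      have hu1 : a i < u := hu.1
      have hu2 : u ≤ a (i+1) := hu.2
      have hai0 : (0:ℝ) ≤ a i := by positivity
      have hai1 : a i ≤ 1 := by
        simp only [ha]; rw [div_le_one hNpos]; linarith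
      have hai11 : a (i+1) ≤ 1 := by
        simp only [ha]; rw [div_le_one hNpos]; push_cast; linarith
      have hu01 : u ∈ Set.Icc (0:ℝ) 1 := ⟨by linarith, by linarith⟩
      have hxi : (i:ℝ)/(N:ℝ) ∈ Set.Icc (0:ℝ) 1 := ⟨hai0, hai1⟩
      have hdist : dist ((i:ℝ)/(N:ℝ)) u < δ := by
        rw [Real.dist_eq, abs_sub_comm,
          abs_of_nonneg (by simp only [ha] at hu1; linarith : (0:ℝ) ≤ u - (i:ℝ)/(N:ℝ))]
        have h2 : u - (i:ℝ)/N ≤ 1/N := by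
          rw [← hdiff]; simp only [ha] at hu2 ⊢; linarith
        linarith
      have := H _ hxi _ hu01 hdist
      rw [Real.dist_eq] at this
      exact le_of_lt this
    calc ‖∫ u in a i..a (i+1), (g ((i:ℝ)/(N:ℝ)) - g u)‖
        ≤ ε/2 * |a (i+1) - a i| :=
          intervalIntegral.norm_integral_le_of_norm_le_const hbd
      _ = ε/2 * (1/N) := by rw [hdiff, abs_of_nonneg (by positivity)]
  calc ‖∑ i ∈ Finset.range N, ((1/(N:ℝ)) * g ((i:ℝ)/(N:ℝ)) - ∫ u in a i..a (i+1), g u)‖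
      ≤ ∑ i ∈ Finset.range N, ‖(1/(N:ℝ)) * g ((i:ℝ)/(N:ℝ)) - ∫ u in a i..a (i+1), g u‖ :=
        norm_sum_le _ _
    _ ≤ ∑ _i ∈ Finset.range N, (ε/2 * (1/N)) := Finset.sum_le_sum hterm
    _ = ε/2 := by
        rw [Finset.sum_const, Finset.card_range, nsmul_eq_mul]
        field_simp
    _ < ε := by linarith

lemma bernoulli_exp_moment {Ω : Type*} [MeasurableSpace Ω] (P : Measure Ω)
    [IsProbabilityMeasure P] (Y : Ω → ℝ) (hYm : Measurable Y)
    (hYv : ∀ ω, Y ω = 0 ∨ Y ω = 1) {p : ℝ} (hp0 : 0 ≤ p)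
    (hYp : P {ω | Y ω = 1} = ENNReal.ofReal p) (s : ℝ) :
    ∫ ω, Real.exp (s * (Y ω - p)) ∂P
      = p * Real.exp (s * (1 - p)) + (1 - p) * Real.exp (-(s * p)) := by
  have hAm : MeasurableSet {ω | Y ω = 1} := hYm (measurableSet_singleton 1)
  have hYint : Integrable Y P := by
    refine (integrable_const (1:ℝ)).mono' hYm.aestronglyMeasurable ?_
    filter_upwards with ω
    rcases hYv ω with h | h <;> simp [h]
  have hEY : ∫ ω, Y ω ∂P = p := by
    have hid : Y = Set.indicator {ω | Y ω = 1} (fun _ => (1:ℝ)) := by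
      funext ω
      rcases hYv ω with h | h <;> simp [Set.indicator, h]
    rw [hid, integral_indicator_const (1:ℝ) hAm, measureReal_def, hYp, smul_eq_mul, mul_one,
      ENNReal.toReal_ofReal hp0]
  have hpt : (fun ω => Real.exp (s * (Y ω - p)))
      = fun ω => Real.exp (-(s * p)) + (Real.exp (s * (1 - p)) - Real.exp (-(s * p))) * Y ω := by
    funext ω
    rcases hYv ω with h | h
    · rw [h]; rw [show s * ((0:ℝ) - p) = -(s*p) by ring]; ring
    · rw [h]; rw [show s * ((1:ℝ) - p) = s * (1-p) by ring]; ring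
  rw [hpt]
  rw [integral_add (integrable_const _) (hYint.const_mul _), integral_const,
    MeasureTheory.integral_const_mul, hEY, probReal_univ]
  simp only [ENNReal.toReal_one, smul_eq_mul, one_mul]
  ring

lemma sigma_sq_pos {f φ : ℝ → ℝ} (hfc : Continuous f) (hfp : Function.Periodic f 1)
    (hφc : Continuous φ) (hφ : ∀ u, φ u ∈ Set.Ioo (0:ℝ) 1) (hfne : ∃ u, f u ≠ 0) :
    0 < ∫ u in (0:ℝ)..1, f u ^ 2 * (φ u * (1 - φ u)) := by
  set g : ℝ → ℝ := fun u => f u ^ 2 * (φ u * (1 - φ u)) with hgdef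
  have hgc : Continuous g := (hfc.pow 2).mul (hφc.mul (continuous_const.sub hφc))
  have hgnn : ∀ u, 0 ≤ g u := fun u =>
    mul_nonneg (pow_two_nonneg _) (mul_nonneg (hφ u).1.le (by linarith [(hφ u).2]))
  obtain ⟨u, hu⟩ := hfne
  set v := Int.fract u with hvdef
  have hfv : f v = f u := by
    have h := hfp.sub_int_mul_eq (x := u) (n := ⌊u⌋)
    rw [mul_one] at h
    exact h
  have hv0 : 0 ≤ v := Int.fract_nonneg u
  have hv1 : v < 1 := Int.fract_lt_one u
  have hgv : 0 < g v :=
    mul_pos (pow_two_pos_of_ne_zero (by rw [hfv]; exact hu))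
      (mul_pos (hφ v).1 (by linarith [(hφ v).2]))
  have hU : IsOpen {x : ℝ | 0 < g x} := isOpen_lt continuous_const hgc
  obtain ⟨ε, hε, hball⟩ := Metric.isOpen_iff.mp hU v hgv
  set w := min (v + ε/2) ((v+1)/2) with hwdef
  have hwv : v < w := lt_min (by linarith) (by linarith)
  have hw1 : w < 1 := lt_of_le_of_lt (min_le_right _ _) (by linarith)
  have hw0 : 0 < w := lt_of_le_of_lt hv0 hwv
  have hwb : w ∈ Metric.ball v ε := by
    rw [Metric.mem_ball, Real.dist_eq, abs_of_nonneg (by linarith : (0:ℝ) ≤ w - v)]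
    have : w ≤ v + ε/2 := min_le_left _ _
    linarith
  have hgw : 0 < g w := hball hwb
  rw [intervalIntegral.integral_pos_iff_support_of_nonneg_ae (Filter.Eventually.of_forall hgnn)
    (hgc.intervalIntegrable 0 1)]
  refine ⟨zero_lt_one, ?_⟩
  have hend : 0 < volume ({x : ℝ | 0 < g x} ∩ Set.Ioo 0 1) :=
    (hU.inter isOpen_Ioo).measure_pos _ ⟨w, hgw, hw0, hw1⟩
  refine lt_of_lt_of_le hend (measure_mono ?_)
  rintro x ⟨hx1, hx2⟩
  exact ⟨ne_of_gt hx1, Set.Ioo_subset_Ioc_self hx2⟩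

lemma per_N_bound {Ω : Type*} [MeasurableSpace Ω] (P : Measure Ω) [IsProbabilityMeasure P]
    {n : ℕ} (Y : Fin n → Ω → ℝ) (hYm : ∀ x, Measurable (Y x))
    (hYv : ∀ x ω, Y x ω = 0 ∨ Y x ω = 1)
    (hYind : iIndepFun Y P)
    (p c : Fin n → ℝ) (hp : ∀ x, 0 ≤ p x ∧ p x ≤ 1)
    (hmarg : ∀ x, P {ω | Y x ω = 1} = ENNReal.ofReal (p x))
    (t : ℝ) (ht : 0 ≤ t) (htc : ∀ x, |t * c x| ≤ 1) (ε : ℝ) :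
    (P {ω | ε ≤ ∑ x : Fin n, (Y x ω - p x) * c x}).toReal
      ≤ Real.exp (-(t * ε)
          + ∑ x : Fin n, (p x * (1 - p x) * (t * c x)^2/2 + 2*|t * c x|^3)) := by
  classical
  set Z : Fin n → Ω → ℝ := fun x ω => (Y x ω - p x) * c x with hZ
  have hZm : ∀ x, Measurable (Z x) := fun x => ((hYm x).sub_const _).mul_const _
  have hZind : iIndepFun Z P :=
    hYind.comp (fun x => fun y => (y - p x) * c x)
      (fun x => (measurable_id.sub_const _).mul_const _)
  have hZb : ∀ x ω, |Z x ω| ≤ |c x| := by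
    intro x ω
    have h1 : |Y x ω - p x| ≤ 1 := by
      rcases hYv x ω with h | h <;> rw [h]
      · rw [zero_sub, abs_neg, abs_of_nonneg (hp x).1]; exact (hp x).2
      · rw [abs_of_nonneg (by linarith [(hp x).2])]; linarith [(hp x).1]
    calc |Z x ω| = |Y x ω - p x| * |c x| := abs_mul _ _
      _ ≤ 1 * |c x| := mul_le_mul_of_nonneg_right h1 (abs_nonneg _)
      _ = |c x| := one_mul _
  have hZint : ∀ x, Integrable (fun ω => Real.exp (t * Z x ω)) P := by
    intro x
    refine (integrable_const (Real.exp (t * |c x|))).mono'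
      (((hZm x).const_mul t).exp).aestronglyMeasurable ?_
    filter_upwards with ω
    rw [Real.norm_eq_abs, Real.abs_exp, Real.exp_le_exp]
    calc t * Z x ω ≤ |t * Z x ω| := le_abs_self _
      _ = t * |Z x ω| := by rw [abs_mul, abs_of_nonneg ht]
      _ ≤ t * |c x| := mul_le_mul_of_nonneg_left (hZb x ω) ht
  set S : Ω → ℝ := ∑ x : Fin n, Z x with hS
  have hSev : {ω | ε ≤ ∑ x : Fin n, (Y x ω - p x) * c x} = {ω | ε ≤ S ω} := by
    ext ω
    simp only [Set.mem_setOf_eq, hS, Finset.sum_apply, hZ]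
  have hSint : Integrable (fun ω => Real.exp (t * S ω)) P :=
    hZind.integrable_exp_mul_sum hZm (fun i _ => hZint i)
  have hcher := measure_ge_le_exp_mul_mgf (μ := P) (X := S) ε ht hSint
  have hmgfx : ∀ x : Fin n, mgf (Z x) P t
      = p x * Real.exp ((t * c x) * (1 - p x))
        + (1 - p x) * Real.exp (-((t * c x) * p x)) := by
    intro x
    have heq : (fun ω => Real.exp (t * Z x ω))
        = fun ω => Real.exp ((t * c x) * (Y x ω - p x)) := by
      funext ω; congr 1; simp only [hZ]; ring
    calc mgf (Z x) P t = ∫ ω, Real.exp (t * Z x ω) ∂P := rfl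
      _ = ∫ ω, Real.exp ((t * c x) * (Y x ω - p x)) ∂P := by rw [heq]
      _ = _ := bernoulli_exp_moment P (Y x) (hYm x) (hYv x) (hp x).1 (hmarg x) (t * c x)
  have hmgfle : ∀ x : Fin n, mgf (Z x) P t
      ≤ Real.exp (p x * (1 - p x) * (t * c x)^2/2 + 2*|t * c x|^3) := by
    intro x
    rw [hmgfx x]
    exact bern_bound (hp x).1 (hp x).2 (htc x)
  have hprod : mgf S P t = ∏ x : Fin n, mgf (Z x) P t := hZind.mgf_sum hZm Finset.univ
  calc (P {ω | ε ≤ ∑ x : Fin n, (Y x ω - p x) * c x}).toReal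
      = (P {ω | ε ≤ S ω}).toReal := by rw [hSev]
    _ ≤ Real.exp (-t * ε) * mgf S P t := hcher
    _ ≤ Real.exp (-t * ε)
        * ∏ x : Fin n, Real.exp (p x * (1 - p x) * (t * c x)^2/2 + 2*|t * c x|^3) := by
        rw [hprod]
        exact mul_le_mul_of_nonneg_left
          (Finset.prod_le_prod (fun i _ => mgf_nonneg) (fun i _ => hmgfle i))
          (Real.exp_pos _).le
    _ = Real.exp (-(t * ε)
          + ∑ x : Fin n, (p x * (1 - p x) * (t * c x)^2/2 + 2*|t * c x|^3)) := by
        rw [← Real.exp_sum, ← Real.exp_add, neg_mul]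

/-- under Assumption (A), for every continuous (`1`-periodic) `f` not identically
zero and every `a > 0`, the moderate deviation upper bound
`limsup_N (N/a_N²) log P(θ₀^N(f) ≥ a) ≤ -a²/(2σ²(f))` holds, where
`σ²(f) = ∫ f² φ(1-φ) > 0` and `θ₀^N(f) = (1/a_N) ∑_x (η₀^N(x)-φ(x/N)) f(x/N)`. -/
theorem initial_field_upper_tail_bound
    {Ω : Type*} [MeasurableSpace Ω] (P : Measure Ω) [IsProbabilityMeasure P]
    (a : ℕ → ℝ) (ha : ∀ N, 0 < a N)
    (ha1 : Tendsto (fun N : ℕ => a N / (N : ℝ)) atTop (nhds 0))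
    (ha2 : Tendsto (fun N : ℕ => Real.sqrt N / a N) atTop (nhds 0))
    (φ : ℝ → ℝ) (hφc : Continuous φ) (hφp : Function.Periodic φ 1)
    (hφ : ∀ u, φ u ∈ Set.Ioo (0 : ℝ) 1)
    (η : (N : ℕ) → Fin N → Ω → ℝ)
    (hmeas : ∀ N x, Measurable (η N x))
    (hval : ∀ N x ω, η N x ω = 0 ∨ η N x ω = 1)
    (hind : ∀ N, iIndepFun (η N) P)
    (hmarg : ∀ N (x : Fin N), P {ω | η N x ω = 1} = ENNReal.ofReal (φ (x / N)))
    (f : ℝ → ℝ) (hfc : Continuous f) (hfp : Function.Periodic f 1)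
    (hfne : ∃ u, f u ≠ 0) (α : ℝ) (hα : 0 < α) :
    0 < (∫ u in (0:ℝ)..1, f u ^ 2 * (φ u * (1 - φ u))) ∧
    Filter.limsup (fun N : ℕ =>
        (((N : ℝ) / (a N) ^ 2 : ℝ) : EReal)
          * ENNReal.log (P {ω | α ≤ (1 / a N) * ∑ x : Fin N, (η N x ω - φ (x / N)) * f (x / N)}))
      atTop
      ≤ ((-(α ^ 2 / (2 * ∫ u in (0:ℝ)..1, f u ^ 2 * (φ u * (1 - φ u)))) : ℝ) : EReal) := by
  have hσ : 0 < ∫ u in (0:ℝ)..1, f u ^ 2 * (φ u * (1 - φ u)) :=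
    sigma_sq_pos hfc hfp hφc hφ hfne
  refine ⟨hσ, ?_⟩
  set σ2 : ℝ := ∫ u in (0:ℝ)..1, f u ^ 2 * (φ u * (1 - φ u)) with hσ2
  have hgc : Continuous (fun u => f u ^ 2 * (φ u * (1 - φ u))) :=
    (hfc.pow 2).mul (hφc.mul (continuous_const.sub hφc))
  -- bound on |f| over [0,1]
  obtain ⟨M, hMb⟩ := isCompact_Icc.exists_bound_of_continuousOn
    (f := f) (s := Set.Icc (0:ℝ) 1) hfc.continuousOn
  have hM : ∀ u ∈ Set.Icc (0:ℝ) 1, |f u| ≤ M := fun u hu => by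
    have := hMb u hu; rwa [Real.norm_eq_abs] at this
  have hM0 : 0 ≤ M := le_trans (abs_nonneg (f 0)) (hM 0 ⟨le_rfl, zero_le_one⟩)
  set lam : ℝ := α / σ2 with hlam
  have hlam0 : 0 < lam := div_pos hα hσ
  set d : ℕ → ℝ := fun N => -(lam*α)
      + lam^2/2 * ((1/(N:ℝ)) * ∑ x : Fin N, f ((x:ℝ)/(N:ℝ)) ^ 2
          * (φ ((x:ℝ)/(N:ℝ)) * (1 - φ ((x:ℝ)/(N:ℝ)))))
      + 2*lam^3*M^3*(a N/(N:ℝ)) with hd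
  have hdlim : Tendsto d atTop (nhds (-(α^2/(2*σ2)))) := by
    have h1 := riemann_tendsto hgc
    have h2 : Tendsto d atTop (nhds (-(lam*α) + lam^2/2 * σ2 + 2*lam^3*M^3*0)) := by
      refine Tendsto.add (Tendsto.add tendsto_const_nhds ?_) ?_
      · exact h1.const_mul _
      · exact ha1.const_mul _
    convert h2 using 2
    rw [hlam]
    field_simp
    ring
  -- eventual inequality
  have hsm : ∀ᶠ N in atTop, lam * M * (a N / (N:ℝ)) ≤ 1 :=
    by
    have h0 : Tendsto (fun N : ℕ => lam * M * (a N / (N:ℝ))) atTop (nhds 0) := by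
      simpa using ha1.const_mul (lam * M)
    exact h0.eventually (eventually_le_nhds zero_lt_one)
  have hev : ∀ᶠ N : ℕ in atTop,
      (((N : ℝ) / (a N) ^ 2 : ℝ) : EReal)
        * ENNReal.log (P {ω | α ≤ (1 / a N) * ∑ x : Fin N,
            (η N x ω - φ (x / N)) * f (x / N)})
      ≤ ((d N : ℝ) : EReal) := by
    filter_upwards [hsm, eventually_ge_atTop 1] with N hsmN hN1
    have haN := ha N
    have hNpos : (0:ℝ) < N := by exact_mod_cast hN1
    set t : ℝ := lam * (a N / (N:ℝ)) with htdef
    have ht0 : 0 ≤ t := mul_nonneg hlam0.le (div_nonneg haN.le hNpos.le)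
    have hxmem : ∀ x : Fin N, ((x:ℝ)/(N:ℝ)) ∈ Set.Icc (0:ℝ) 1 := by
      intro x
      constructor
      · positivity
      · rw [div_le_one hNpos]
        exact_mod_cast x.2.le
    have hcM : ∀ x : Fin N, |f ((x:ℝ)/(N:ℝ))| ≤ M := fun x => hM _ (hxmem x)
    have htc : ∀ x : Fin N, |t * f ((x:ℝ)/(N:ℝ))| ≤ 1 := by
      intro x
      rw [abs_mul, abs_of_nonneg ht0]
      calc t * |f ((x:ℝ)/(N:ℝ))| ≤ t * M := mul_le_mul_of_nonneg_left (hcM x) ht0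
        _ = lam * M * (a N / (N:ℝ)) := by rw [htdef]; ring
        _ ≤ 1 := hsmN
    -- event rewriting
    have hEeq : {ω : Ω | α ≤ (1 / a N) * ∑ x : Fin N, (η N x ω - φ ((x:ℝ) / (N:ℝ)))
          * f ((x:ℝ)/(N:ℝ))}
        = {ω : Ω | a N * α ≤ ∑ x : Fin N, (η N x ω - φ ((x:ℝ) / (N:ℝ))) * f ((x:ℝ)/(N:ℝ))} := by
      ext ω
      simp only [Set.mem_setOf_eq]
      constructor
      · intro h
        calc a N * α ≤ a N * ((1 / a N) * ∑ x : Fin N,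
              (η N x ω - φ ((x:ℝ) / (N:ℝ))) * f ((x:ℝ)/(N:ℝ))) :=
            mul_le_mul_of_nonneg_left h haN.le
          _ = _ := by field_simp
      · intro h
        have h2 : α = (1 / a N) * (a N * α) := by field_simp
        rw [h2]
        exact mul_le_mul_of_nonneg_left h (by positivity)
    have hPle := per_N_bound P (η N) (hmeas N) (hval N) (hind N)
      (fun x => φ ((x:ℝ)/(N:ℝ))) (fun x => f ((x:ℝ)/(N:ℝ)))
      (fun x => ⟨(hφ _).1.le, (hφ _).2.le⟩) (hmarg N) t ht0 htc (a N * α)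
    rw [hEeq]
    by_cases hP0 : P {ω : Ω | a N * α ≤ ∑ x : Fin N,
        (η N x ω - φ ((x:ℝ) / (N:ℝ))) * f ((x:ℝ)/(N:ℝ))} = 0
    · rw [hP0, ENNReal.log_zero, EReal.coe_mul_bot_of_pos (by positivity)]
      exact bot_le
    · have hPtop : P {ω : Ω | a N * α ≤ ∑ x : Fin N,
          (η N x ω - φ ((x:ℝ) / (N:ℝ))) * f ((x:ℝ)/(N:ℝ))} ≠ ⊤ := measure_ne_top P _
      rw [ENNReal.log_pos_real hP0 hPtop, ← EReal.coe_mul, EReal.coe_le_coe_iff]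
      have htR : 0 < (P {ω : Ω | a N * α ≤ ∑ x : Fin N,
          (η N x ω - φ ((x:ℝ) / (N:ℝ))) * f ((x:ℝ)/(N:ℝ))}).toReal :=
        ENNReal.toReal_pos hP0 hPtop
      set B : ℝ := -(t * (a N * α))
          + ∑ x : Fin N, (φ ((x:ℝ)/(N:ℝ)) * (1 - φ ((x:ℝ)/(N:ℝ))) * (t * f ((x:ℝ)/(N:ℝ)))^2/2
              + 2*|t * f ((x:ℝ)/(N:ℝ))|^3) with hB
      have hlog : Real.log ((P {ω : Ω | a N * α ≤ ∑ x : Fin N,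
          (η N x ω - φ ((x:ℝ) / (N:ℝ))) * f ((x:ℝ)/(N:ℝ))}).toReal) ≤ B := by
        rw [Real.log_le_iff_le_exp htR]
        exact hPle
      have hsum_le : B ≤ -(t * (a N * α))
          + (t^2/2 * ∑ x : Fin N, f ((x:ℝ)/(N:ℝ)) ^ 2
              * (φ ((x:ℝ)/(N:ℝ)) * (1 - φ ((x:ℝ)/(N:ℝ))))
            + (N:ℝ) * (2*t^3*M^3)) := by
        rw [hB]
        have hterm : ∀ x : Fin N,
            φ ((x:ℝ)/(N:ℝ)) * (1 - φ ((x:ℝ)/(N:ℝ))) * (t * f ((x:ℝ)/(N:ℝ)))^2/2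
              + 2*|t * f ((x:ℝ)/(N:ℝ))|^3
            ≤ f ((x:ℝ)/(N:ℝ)) ^ 2 * (φ ((x:ℝ)/(N:ℝ)) * (1 - φ ((x:ℝ)/(N:ℝ)))) * t^2/2
              + 2*t^3*M^3 := by
          intro x
          have h1 : φ ((x:ℝ)/(N:ℝ)) * (1 - φ ((x:ℝ)/(N:ℝ))) * (t * f ((x:ℝ)/(N:ℝ)))^2/2
              = f ((x:ℝ)/(N:ℝ)) ^ 2 * (φ ((x:ℝ)/(N:ℝ)) * (1 - φ ((x:ℝ)/(N:ℝ)))) * t^2/2 := by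
            ring
          have h2 : |t * f ((x:ℝ)/(N:ℝ))|^3 ≤ t^3*M^3 := by
            rw [abs_mul, abs_of_nonneg ht0]
            calc (t*|f ((x:ℝ)/(N:ℝ))|)^3 ≤ (t*M)^3 :=
                pow_le_pow_left₀ (by positivity) (mul_le_mul_of_nonneg_left (hcM x) ht0) 3
              _ = t^3*M^3 := by ring
          linarith
        have hsplit : ∑ x : Fin N,
            (f ((x:ℝ)/(N:ℝ)) ^ 2 * (φ ((x:ℝ)/(N:ℝ)) * (1 - φ ((x:ℝ)/(N:ℝ)))) * t^2/2
              + 2*t^3*M^3)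
            = t^2/2 * ∑ x : Fin N, f ((x:ℝ)/(N:ℝ)) ^ 2
                * (φ ((x:ℝ)/(N:ℝ)) * (1 - φ ((x:ℝ)/(N:ℝ))))
              + (N:ℝ) * (2*t^3*M^3) := by
          rw [Finset.sum_add_distrib, Finset.sum_const, Finset.card_univ,
            Fintype.card_fin, nsmul_eq_mul]
          congr 1
          rw [Finset.mul_sum]
          exact Finset.sum_congr rfl (fun x _ => by ring)
        have hss := Finset.sum_le_sum (fun x (_ : x ∈ (Finset.univ : Finset (Fin N))) => hterm x)
        rw [hsplit] at hss
        linarith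
      calc ((N:ℝ)/(a N)^2) * Real.log ((P {ω : Ω | a N * α ≤ ∑ x : Fin N,
            (η N x ω - φ ((x:ℝ) / (N:ℝ))) * f ((x:ℝ)/(N:ℝ))}).toReal)
          ≤ ((N:ℝ)/(a N)^2) * B := mul_le_mul_of_nonneg_left hlog (by positivity)
        _ ≤ ((N:ℝ)/(a N)^2) * (-(t * (a N * α))
            + (t^2/2 * ∑ x : Fin N, f ((x:ℝ)/(N:ℝ)) ^ 2
                * (φ ((x:ℝ)/(N:ℝ)) * (1 - φ ((x:ℝ)/(N:ℝ))))
              + (N:ℝ) * (2*t^3*M^3))) := mul_le_mul_of_nonneg_left hsum_le (by positivity)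
        _ = d N := by
            rw [hd, htdef]
            field_simp
            ring
  calc Filter.limsup (fun N : ℕ =>
        (((N : ℝ) / (a N) ^ 2 : ℝ) : EReal)
          * ENNReal.log (P {ω | α ≤ (1 / a N) * ∑ x : Fin N,
              (η N x ω - φ (x / N)) * f (x / N)})) atTop
      ≤ Filter.limsup (fun N : ℕ => ((d N : ℝ) : EReal)) atTop := limsup_le_limsup hev
    _ = ((-(α^2/(2*σ2)) : ℝ) : EReal) := by
        have hco : Tendsto (fun N : ℕ => ((d N : ℝ) : EReal)) atTop
            (nhds ((-(α^2/(2*σ2)) : ℝ) : EReal)) := EReal.tendsto_coe.mpr hdlim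
        exact hco.limsup_eq
end

section
/- Under Assumption (A), for every continuous $f : \mathbb{T} \to \mathbb{R}$, $\limsup_{M \to \infty} \limsup_{N \to \infty} \frac{N}{a_N^2} \log P\big(|\theta^N_0(f)| > M\big) = -\infty$; that is, for every $R > 0$ there exists $M_0$ such that for all $M \geq M_0$, $\limsup_{N \to \infty} \frac{N}{a_N^2} \log P(|\theta^N_0(f)| > M) \leq -R$. -/
/-!
Each summand `(η_x - φ(x/N)) f(x/N)` is centred and bounded by `C ≥ sup |f|`, so Hoeffding's
inequality gives `P(|θ^N_0(f)| > M) ≤ 2 exp(-M² a_N² / (2 N C²))`. Multiplying the logarithm by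
`N / a_N² → 0` kills the prefactor `2` and leaves `-M² / (2 C²)`, which is below `-R` once `M` is
large.
-/

open MeasureTheory ProbabilityTheory Filter Real

section Hoeffding

variable {Ω : Type*} [MeasurableSpace Ω] {μ : Measure Ω}

theorem integral_eq_measureReal_of_forall_eq_zero_or_one {Z : Ω → ℝ} (hZ : Measurable Z)
    (h01 : ∀ ω, Z ω = 0 ∨ Z ω = 1) : μ[Z] = μ.real {ω | Z ω = 1} := by
  have h_ind : Z = Set.indicator {ω | Z ω = 1} 1 := by
    funext ω
    rcases h01 ω with h | h <;> simp [h]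
  conv_lhs => rw [h_ind]
  exact integral_indicator_one (hZ (measurableSet_singleton 1))

variable [IsProbabilityMeasure μ] {ι : Type*} [Fintype ι]

theorem measureReal_abs_sum_sub_integral_ge_le {X : ι → Ω → ℝ} (h_indep : iIndepFun X μ)
    (h_meas : ∀ i, AEMeasurable (X i) μ) {a b : ℝ} (h_bdd : ∀ i, ∀ᵐ ω ∂μ, X i ω ∈ Set.Icc a b)
    {ε : ℝ} (hε : 0 ≤ ε) :
    μ.real {ω | ε ≤ |∑ i, (X i ω - μ[X i])|} ≤
      2 * exp (-2 * ε ^ 2 / (Fintype.card ι * (b - a) ^ 2)) := by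
  have h_indep_centered : iIndepFun (fun i ω => X i ω - μ[X i]) μ :=
    h_indep.comp (fun i x => x - ∫ ω, X i ω ∂μ) fun _ => measurable_id.sub_const _
  have h_sum := HasSubgaussianMGF.sum_of_iIndepFun h_indep_centered (s := Finset.univ)
    fun i _ => hasSubgaussianMGF_of_mem_Icc (h_meas i) (h_bdd i)
  have h_param : -ε ^ 2 / (2 * ((∑ _i : ι, (‖b - a‖₊ / 2) ^ 2 : NNReal) : ℝ)) =
      -2 * ε ^ 2 / (Fintype.card ι * (b - a) ^ 2) := by
    simp only [Finset.sum_const, Finset.card_univ, nsmul_eq_mul, NNReal.coe_mul,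
      NNReal.coe_natCast, NNReal.coe_pow, NNReal.coe_div, coe_nnnorm, Real.norm_eq_abs,
      NNReal.coe_ofNat, div_pow, sq_abs]
    field_simp
  have h_split : {ω | ε ≤ |∑ i, (X i ω - μ[X i])|} ⊆
      {ω | ε ≤ ∑ i, (X i ω - μ[X i])} ∪ {ω | ε ≤ -∑ i, (X i ω - μ[X i])} := fun _ hω =>
    le_abs.1 (Set.mem_ofPred.1 hω)
  calc _ ≤ _ := measureReal_mono h_split
    _ ≤ _ := measureReal_union_le _ _
    _ ≤ _ := add_le_add (h_sum.measure_ge_le hε) (h_sum.neg.measure_ge_le hε)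
    _ = _ := by rw [h_param]; ring

variable {η : ι → Ω → ℝ} (h_meas : ∀ i, Measurable (η i)) (h01 : ∀ i ω, η i ω = 0 ∨ η i ω = 1)
  (h_indep : iIndepFun η μ) {p w : ι → ℝ} (hp : ∀ i, μ.real {ω | η i ω = 1} = p i)
  {C : ℝ} (hw : ∀ i, |w i| ≤ C)
include h_meas h01 h_indep hp hw

theorem measureReal_abs_sum_sub_mul_ge_le {ε : ℝ} (hε : 0 ≤ ε) :
    μ.real {ω | ε ≤ |∑ i, (η i ω - p i) * w i|} ≤
      2 * exp (-ε ^ 2 / (2 * Fintype.card ι * C ^ 2)) := by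
  have h_mean : ∀ i, μ[fun ω => η i ω * w i] = p i * w i := fun i => by
    rw [integral_mul_const, integral_eq_measureReal_of_forall_eq_zero_or_one (h_meas i) (h01 i),
      hp i]
  have h_bdd : ∀ i, ∀ᵐ ω ∂μ, η i ω * w i ∈ Set.Icc (-C) C := fun i => ae_of_all _ fun ω => by
    refine abs_le.1 ?_
    rcases h01 i ω with h | h <;> simp [h, hw i, (abs_nonneg _).trans (hw i)]
  have h_indep_weighted : iIndepFun (fun i ω => η i ω * w i) μ :=
    h_indep.comp (fun i x => x * w i) fun _ => measurable_id.mul_const _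
  have h := measureReal_abs_sum_sub_integral_ge_le h_indep_weighted
    (fun i => ((h_meas i).mul_const _).aemeasurable) h_bdd hε
  simp only [h_mean, ← sub_mul] at h
  convert h using 3
  ring

theorem measureReal_lt_abs_div_sum_sub_mul_le {s : ℝ} (hs : 0 < s) {M : ℝ} (hM : 0 ≤ M) :
    μ.real {ω | M < |(1 / s) * ∑ i, (η i ω - p i) * w i|} ≤
      2 * exp (-(M ^ 2 / (2 * C ^ 2)) / (Fintype.card ι / s ^ 2)) := by
  calc _ ≤ μ.real {ω | M * s ≤ |∑ i, (η i ω - p i) * w i|} := by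
        refine measureReal_mono fun ω (hω : M < _) => ?_
        rw [abs_mul, abs_of_pos (one_div_pos.2 hs), one_div_mul_eq_div, lt_div_iff₀ hs] at hω
        exact hω.le
    _ ≤ _ := measureReal_abs_sum_sub_mul_ge_le h_meas h01 h_indep hp hw (by positivity)
    _ = _ := by congr 2; rw [div_div_eq_mul_div]; ring

end Hoeffding

theorem ENNReal.coe_mul_log_le_of_toReal_le {c : ℝ} (hc : 0 ≤ c) {p : ENNReal} (hp : p ≠ ⊤)
    {q : ℝ} (hq : 0 < q) (hpq : p.toReal ≤ q) :
    (c : EReal) * ENNReal.log p ≤ ((c * Real.log q : ℝ) : EReal) := by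
  rw [EReal.coe_mul, ← ENNReal.log_ofReal_of_pos hq]
  gcongr
  exact (ENNReal.le_ofReal_iff_toReal_le hp hq.le).2 hpq

theorem limsup_mul_log_le_of_le_mul_exp {c : ℕ → ℝ} (hc : Tendsto c atTop (nhds 0))
    {p : ℕ → ENNReal} (hp : ∀ N, p N ≠ ⊤) {K L : ℝ} (hK : 0 < K)
    (h_bound : ∀ᶠ N in atTop, 0 < c N ∧ (p N).toReal ≤ K * exp (-L / c N)) :
    limsup (fun N => (c N : EReal) * ENNReal.log (p N)) atTop ≤ ((-L : ℝ) : EReal) := by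
  have h_lim : Tendsto (fun N => ((c N * Real.log K - L : ℝ) : EReal)) atTop
      (nhds ((-L : ℝ) : EReal)) := by
    refine (continuous_coe_real_ereal.tendsto _).comp ?_
    simpa using (hc.mul_const (Real.log K)).sub_const L
  rw [← h_lim.limsup_eq]
  refine limsup_le_limsup ?_
  filter_upwards [h_bound] with N ⟨hcN, hpN⟩
  calc (c N : EReal) * ENNReal.log (p N) ≤ ((c N * Real.log (K * exp (-L / c N)) : ℝ) : EReal) :=
        ENNReal.coe_mul_log_le_of_toReal_le hcN.le (hp N) (by positivity) hpN
    _ = ((c N * Real.log K - L : ℝ) : EReal) := by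
        rw [Real.log_mul hK.ne' (exp_ne_zero _), Real.log_exp, mul_add,
          mul_div_cancel₀ _ hcN.ne', sub_eq_add_neg]

theorem initial_field_exponential_tightness_general
    {Ω : Type*} [MeasurableSpace Ω] (P : Measure Ω) [IsProbabilityMeasure P]
    (a : ℕ → ℝ) (ha : ∀ N, 0 < a N)
    (ha2 : Tendsto (fun N : ℕ => Real.sqrt N / a N) atTop (nhds 0))
    (φ : ℝ → ℝ)
    (hφ : ∀ u, φ u ∈ Set.Ioo (0 : ℝ) 1)
    (η : (N : ℕ) → Fin N → Ω → ℝ)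
    (hmeas : ∀ N x, Measurable (η N x))
    (hval : ∀ N x ω, η N x ω = 0 ∨ η N x ω = 1)
    (hind : ∀ N, iIndepFun (η N) P)
    (hmarg : ∀ N (x : Fin N), P {ω | η N x ω = 1} = ENNReal.ofReal (φ (x / N)))
    (f : ℝ → ℝ) (hfc : Continuous f) :
    ∀ R > (0 : ℝ), ∃ M₀ : ℝ, ∀ M ≥ M₀,
      Filter.limsup (fun N : ℕ =>
          (((N : ℝ) / (a N) ^ 2 : ℝ) : EReal)
            * ENNReal.log (P {ω |
                M < |(1 / a N) * ∑ x : Fin N, (η N x ω - φ (x / N)) * f (x / N)|}))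
        atTop ≤ ((-R : ℝ) : EReal) := by
  obtain ⟨B, hB⟩ := isCompact_Icc.exists_bound_of_continuousOn (f := f) hfc.continuousOn
  set C := max B 1
  have hfC : ∀ N (x : Fin N), |f (x / N)| ≤ C := fun N x =>
    (hB _ ⟨by positivity, div_le_one_of_le₀ (mod_cast x.isLt.le) (Nat.cast_nonneg _)⟩).trans
      (le_max_left _ _)
  have h_rate : Tendsto (fun N : ℕ => (N : ℝ) / a N ^ 2) atTop (nhds 0) := by
    simpa [div_pow] using ha2.pow 2
  intro R hR
  refine ⟨C * sqrt (2 * R), fun M hM => ?_⟩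
  have hM_sq : R * (2 * C ^ 2) ≤ M ^ 2 := calc
    R * (2 * C ^ 2) = (C * sqrt (2 * R)) ^ 2 := by rw [mul_pow, sq_sqrt (by positivity)]; ring
    _ ≤ M ^ 2 := pow_le_pow_left₀ (by positivity) hM 2
  have h_tail : ∀ᶠ N : ℕ in atTop, 0 < (N : ℝ) / a N ^ 2 ∧
      (P {ω | M < |(1 / a N) * ∑ x : Fin N, (η N x ω - φ (x / N)) * f (x / N)|}).toReal ≤
        2 * exp (-(M ^ 2 / (2 * C ^ 2)) / ((N : ℝ) / a N ^ 2)) := by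
    filter_upwards [eventually_ge_atTop 1] with N hN
    refine ⟨div_pos (by positivity) (pow_pos (ha N) 2), ?_⟩
    have h := measureReal_lt_abs_div_sum_sub_mul_le (hmeas N) (hval N) (hind N)
      (fun x => by rw [measureReal_def, hmarg, ENNReal.toReal_ofReal (hφ _).1.le])
      (hfC N) (ha N) ((by positivity : 0 ≤ C * sqrt (2 * R)).trans hM)
    rwa [Fintype.card_fin] at h
  calc _ ≤ ((-(M ^ 2 / (2 * C ^ 2)) : ℝ) : EReal) :=
        limsup_mul_log_le_of_le_mul_exp h_rate (fun _ => measure_ne_top _ _) two_pos h_tail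
    _ ≤ ((-R : ℝ) : EReal) := by
        rw [EReal.coe_le_coe_iff, neg_le_neg_iff, le_div_iff₀ (by positivity)]
        exact hM_sq

/-- under Assumption (A), for every continuous (`1`-periodic) `f`, the scaled
initial density field `θ₀^N(f)` is exponentially negligible at infinity:
for every `R > 0` there is `M₀` such that for all `M ≥ M₀`,
`limsup_N (N/a_N²) log P(|θ₀^N(f)| > M) ≤ -R`. -/
theorem initial_field_exponential_tightness
    {Ω : Type*} [MeasurableSpace Ω] (P : Measure Ω) [IsProbabilityMeasure P]
    (a : ℕ → ℝ) (ha : ∀ N, 0 < a N)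
    (ha1 : Tendsto (fun N : ℕ => a N / (N : ℝ)) atTop (nhds 0))
    (ha2 : Tendsto (fun N : ℕ => Real.sqrt N / a N) atTop (nhds 0))
    (φ : ℝ → ℝ) (hφc : Continuous φ) (hφp : Function.Periodic φ 1)
    (hφ : ∀ u, φ u ∈ Set.Ioo (0 : ℝ) 1)
    (η : (N : ℕ) → Fin N → Ω → ℝ)
    (hmeas : ∀ N x, Measurable (η N x))
    (hval : ∀ N x ω, η N x ω = 0 ∨ η N x ω = 1)
    (hind : ∀ N, iIndepFun (η N) P)
    (hmarg : ∀ N (x : Fin N), P {ω | η N x ω = 1} = ENNReal.ofReal (φ (x / N)))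
    (f : ℝ → ℝ) (hfc : Continuous f) (hfp : Function.Periodic f 1) :
    ∀ R > (0 : ℝ), ∃ M₀ : ℝ, ∀ M ≥ M₀,
      Filter.limsup (fun N : ℕ =>
          (((N : ℝ) / (a N) ^ 2 : ℝ) : EReal)
            * ENNReal.log (P {ω |
                M < |(1 / a N) * ∑ x : Fin N, (η N x ω - φ (x / N)) * f (x / N)|}))
        atTop ≤ ((-R : ℝ) : EReal) :=
  initial_field_exponential_tightness_general P a ha ha2 φ hφ η hmeas hval hind hmarg f hfc
end

section
/- Let $\phi : \mathbb{T} \to (0,1)$ and $g : \mathbb{T} \to \mathbb{R}$ be continuous, and let $\{a_N\}$ be a positive sequence with $a_N/N \to 0$ and $\sqrt{N}/a_N \to 0$. For $N$ large enough that $0 < \phi(x/N) + \frac{a_N}{N} g(x/N) < 1$ for all $x$, let $\{\eta^N(x)\}_{x \in \mathbb{T}^N}$ be independent $\{0,1\}$-valued random variables with $P(\eta^N(x) = 1) = \phi(x/N) + \frac{a_N}{N} g(x/N)$, and define the log-likelihood ratio $R_N = \sum_{x \in \mathbb{T}^N}\Big[\eta^N(x)\log\frac{\phi(x/N)}{\phi(x/N)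 + \frac{a_N}{N}g(x/N)} + (1-\eta^N(x))\log\frac{1-\phi(x/N)}{1-\phi(x/N) - \frac{a_N}{N}g(x/N)}\Big]$. Then $\frac{N}{a_N^2} R_N$ converges in probability to $-\frac{1}{2}\int_{\mathbb{T}} \frac{g^2(u)}{\phi(u)(1-\phi(u))}\,du$ as $N \to \infty$. -/
/-!
Write `t = (a_N / N) g(x/N)`. Under the perturbed measure the summand of `R_N` at `x` has mean
`-KL(Ber(φ + t) ‖ Ber(φ)) = -t² / (2 φ (1 - φ)) + O(t³)`, so the mean of `(N / a_N²) R_N` is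
`-1/2` times a Riemann sum of `g² / (φ (1 - φ))`, up to `O(a_N / N)`. The summands are
independent with variances `O(t²)`, so the variance of `(N / a_N²) R_N` is `O(N / a_N²)`.
Chebyshev's inequality concludes.
-/

open MeasureTheory ProbabilityTheory Filter

open Real Set Topology

namespace Real

lemma abs_log_one_add_sub_add_sq_le {x : ℝ} (h : |x| ≤ 1 / 2) :
    |log (1 + x) - x + x ^ 2 / 2| ≤ 2 * |x| ^ 3 := by
  have hx : |-x| < 1 := by rw [abs_neg]; linarith
  have key := abs_log_sub_add_sum_range_le hx 2
  simp only [Finset.sum_range_succ, Finset.sum_range_zero, abs_neg] at key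
  norm_num at key
  have h0 : 0 < 1 - |x| := by linarith
  calc |log (1 + x) - x + x ^ 2 / 2| = |-x + x ^ 2 / 2 + log (1 + x)| := by congr 1; ring
    _ ≤ |x| ^ 3 / (1 - |x|) := key
    _ ≤ 2 * |x| ^ 3 := by
      rw [div_le_iff₀ h0]
      nlinarith [pow_nonneg (abs_nonneg x) 3]

lemma abs_log_one_add_le {x : ℝ} (h : |x| ≤ 1 / 2) : |log (1 + x)| ≤ 2 * |x| := by
  have he := abs_le.mp (abs_log_one_add_sub_add_sq_le h)
  have hx2 : |x| ^ 2 ≤ 1 / 4 := by nlinarith [abs_nonneg x]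
  have hx3 : |x| ^ 3 ≤ |x| / 4 := by nlinarith [mul_le_mul_of_nonneg_left hx2 (abs_nonneg x)]
  rw [abs_le]
  constructor <;> nlinarith [neg_abs_le x, le_abs_self x, sq_abs x, abs_nonneg x]

lemma abs_one_add_mul_log_one_add_sub_le {x : ℝ} (h : |x| ≤ 1 / 2) :
    |(1 + x) * log (1 + x) - (x + x ^ 2 / 2)| ≤ 4 * |x| ^ 3 := by
  set e := log (1 + x) - x + x ^ 2 / 2
  have he : |e| ≤ 2 * |x| ^ 3 := abs_log_one_add_sub_add_sq_le h
  have h1x : |1 + x| ≤ 3 / 2 := by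
    calc |1 + x| ≤ |1| + |x| := abs_add_le _ _
      _ ≤ 3 / 2 := by rw [abs_one]; linarith
  calc |(1 + x) * log (1 + x) - (x + x ^ 2 / 2)| = |(1 + x) * e + -(x ^ 3 / 2)| := by
        congr 1; simp only [e]; ring
    _ ≤ |1 + x| * |e| + |x| ^ 3 / 2 := by
        refine (abs_add_le _ _).trans_eq ?_
        rw [abs_mul, abs_neg, abs_div, abs_pow, abs_two]
    _ ≤ 3 / 2 * (2 * |x| ^ 3) + |x| ^ 3 / 2 := by gcongr
    _ ≤ 4 * |x| ^ 3 := by nlinarith [pow_nonneg (abs_nonneg x) 3]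

end Real

lemma log_div_add_eq_neg_log_one_add {p : ℝ} (t : ℝ) (hp : p ≠ 0) :
    log (p / (p + t)) = -log (1 + t / p) := by
  rw [← log_inv, one_add_div hp, inv_div]

section Site

variable {c p t : ℝ}

lemma abs_div_le_abs_div_of_le (hc : 0 < c) (hcp : c ≤ p) : |t / p| ≤ |t| / c := by
  rw [abs_div, abs_of_pos (hc.trans_le hcp)]
  exact div_le_div_of_nonneg_left (abs_nonneg t) hc hcp

lemma abs_div_le_half (hc : 0 < c) (hcp : c ≤ p) (ht : |t| ≤ c / 2) : |t / p| ≤ 1 / 2 :=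
  (abs_div_le_abs_div_of_le hc hcp).trans (by rw [div_le_iff₀ hc]; linarith)

lemma add_mem_Ioo_of_abs_le (hc : 0 < c) (hp : c ≤ p) (hq : c ≤ 1 - p) (ht : |t| ≤ c / 2) :
    p + t ∈ Ioo 0 1 := by
  obtain ⟨ht₁, ht₂⟩ := abs_le.mp ht
  constructor <;> linarith

lemma abs_log_one_add_div_le (hc : 0 < c) (hcp : c ≤ p) (ht : |t| ≤ c / 2) :
    |log (1 + t / p)| ≤ 2 / c * |t| :=
  calc |log (1 + t / p)| ≤ 2 * |t / p| := abs_log_one_add_le (abs_div_le_half hc hcp ht)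
    _ ≤ 2 / c * |t| := by rw [mul_comm_div]; gcongr; exact abs_div_le_abs_div_of_le hc hcp

lemma mul_abs_one_add_div_mul_log_sub_le (hc : 0 < c) (hcp : c ≤ p) (ht : |t| ≤ c / 2) :
    p * |(1 + t / p) * log (1 + t / p) - (t / p + (t / p) ^ 2 / 2)| ≤ 4 / c ^ 2 * |t| ^ 3 :=
  calc p * |(1 + t / p) * log (1 + t / p) - (t / p + (t / p) ^ 2 / 2)|
      ≤ p * (4 * |t / p| ^ 3) := mul_le_mul_of_nonneg_left
        (abs_one_add_mul_log_one_add_sub_le (abs_div_le_half hc hcp ht)) (hc.trans_le hcp).le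
    _ = 4 / p ^ 2 * |t| ^ 3 := by rw [abs_div, abs_of_pos (hc.trans_le hcp)]; field_simp
    _ ≤ 4 / c ^ 2 * |t| ^ 3 := by gcongr

lemma abs_log_div_add_sub_log_div_sub_le (hc : 0 < c) (hp : c ≤ p) (hq : c ≤ 1 - p)
    (ht : |t| ≤ c / 2) :
    |log (p / (p + t)) - log ((1 - p) / (1 - p - t))| ≤ 4 / c * |t| := by
  have ht' : |-t| ≤ c / 2 := by rwa [abs_neg]
  rw [sub_eq_add_neg (1 - p) t, log_div_add_eq_neg_log_one_add t (hc.trans_le hp).ne',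
    log_div_add_eq_neg_log_one_add (-t) (hc.trans_le hq).ne']
  have h₁ := abs_log_one_add_div_le hc hp ht
  have h₂ := abs_log_one_add_div_le hc hq ht'
  rw [abs_neg] at h₂
  calc |-log (1 + t / p) - -log (1 + -t / (1 - p))|
      ≤ |log (1 + t / p)| + |log (1 + -t / (1 - p))| := by
        rw [neg_sub_neg, abs_sub_comm]; exact abs_sub _ _
    _ ≤ 2 / c * |t| + 2 / c * |t| := add_le_add h₁ h₂
    _ = 4 / c * |t| := by ring

lemma abs_bernoulli_log_ratio_mean_add_le (hc : 0 < c) (hp : c ≤ p) (hq : c ≤ 1 - p)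
    (ht : |t| ≤ c / 2) :
    |(p + t) * log (p / (p + t)) + (1 - (p + t)) * log ((1 - p) / (1 - p - t))
      + t ^ 2 / (2 * (p * (1 - p)))| ≤ 8 / c ^ 2 * |t| ^ 3 := by
  have hp0 : p ≠ 0 := (hc.trans_le hp).ne'
  have hq0 : 1 - p ≠ 0 := (hc.trans_le hq).ne'
  have ht' : |-t| ≤ c / 2 := by rwa [abs_neg]
  have h₁ := mul_abs_one_add_div_mul_log_sub_le hc hp ht
  have h₂ := mul_abs_one_add_div_mul_log_sub_le hc hq ht'
  rw [abs_neg] at h₂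
  set x₁ := t / p
  set x₂ := -t / (1 - p)
  set e₁ := (1 + x₁) * log (1 + x₁) - (x₁ + x₁ ^ 2 / 2)
  set e₂ := (1 + x₂) * log (1 + x₂) - (x₂ + x₂ ^ 2 / 2)
  -- `(p + t) log ((p + t) / p) = p (1 + x₁) log (1 + x₁)`, and likewise for `1 - p`; the
  -- first-order terms `p x₁ + (1 - p) x₂ = 0` cancel.
  have key : (p + t) * log (p / (p + t)) + (1 - (p + t)) * log ((1 - p) / (1 - p - t))
      + t ^ 2 / (2 * (p * (1 - p))) = -(p * e₁) - (1 - p) * e₂ := by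
    rw [sub_eq_add_neg (1 - p) t, log_div_add_eq_neg_log_one_add t hp0,
      log_div_add_eq_neg_log_one_add (-t) hq0]
    simp only [e₁, e₂, x₁, x₂]
    field_simp
    ring
  rw [key]
  calc |-(p * e₁) - (1 - p) * e₂| ≤ p * |e₁| + (1 - p) * |e₂| := by
        refine (abs_sub _ _).trans_eq ?_
        rw [abs_neg, abs_mul, abs_mul, abs_of_pos (hc.trans_le hp), abs_of_pos (hc.trans_le hq)]
    _ ≤ 4 / c ^ 2 * |t| ^ 3 + 4 / c ^ 2 * |t| ^ 3 := add_le_add h₁ h₂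
    _ = 8 / c ^ 2 * |t| ^ 3 := by ring

end Site

section IndependentSum

variable {Ω ι : Type*} [MeasurableSpace Ω] {P : Measure Ω}

lemma integral_eq_of_eq_zero_or_one {X : Ω → ℝ} (hm : Measurable X)
    (hv : ∀ ω, X ω = 0 ∨ X ω = 1) {p : ℝ} (hp : 0 ≤ p)
    (hP : P {ω | X ω = 1} = ENNReal.ofReal p) : P[X] = p := by
  have hX : X = {ω | X ω = 1}.indicator 1 := by
    funext ω
    rcases hv ω with h | h <;> simp [h]
  have hs : MeasurableSet {ω | X ω = 1} := hm (measurableSet_singleton 1)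
  conv_lhs => rw [hX]
  rw [integral_indicator_one hs, measureReal_def, hP, ENNReal.toReal_ofReal hp]

lemma memLp_of_eq_zero_or_one [IsFiniteMeasure P] {X : Ω → ℝ} (hm : Measurable X)
    (hv : ∀ ω, X ω = 0 ∨ X ω = 1) : MemLp X 2 P :=
  MemLp.of_bound hm.aestronglyMeasurable 1 <| .of_forall fun ω => by
    rcases hv ω with h | h <;> simp [h]

lemma variance_le_of_eq_zero_or_one [IsProbabilityMeasure P] {X : Ω → ℝ} (hm : Measurable X)
    (hv : ∀ ω, X ω = 0 ∨ X ω = 1) : Var[X; P] ≤ 1 / 4 :=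
  (variance_le_sq_of_bounded (a := 0) (b := 1)
    (.of_forall fun ω => by rcases hv ω with h | h <;> simp [h]) hm.aemeasurable).trans_eq
    (by norm_num)

variable [Fintype ι] {η : ι → Ω → ℝ}

lemma memLp_sum_mul_add_one_sub_mul [IsFiniteMeasure P] (hη : ∀ x, MemLp (η x) 2 P)
    (A B : ι → ℝ) : MemLp (fun ω => ∑ x, (η x ω * A x + (1 - η x ω) * B x)) 2 P :=
  memLp_finsetSum _ (f := fun x ω => η x ω * A x + (1 - η x ω) * B x) fun x _ =>
    ((hη x).mul_const _).add (((memLp_const 1).sub (hη x)).mul_const _)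

lemma integral_sum_mul_add_one_sub_mul [IsProbabilityMeasure P] (hη : ∀ x, Integrable (η x) P)
    (A B : ι → ℝ) :
    ∫ ω, ∑ x, (η x ω * A x + (1 - η x ω) * B x) ∂P
      = ∑ x, (P[η x] * A x + (1 - P[η x]) * B x) := by
  rw [integral_finsetSum _ (f := fun x ω => η x ω * A x + (1 - η x ω) * B x) fun x _ =>
    ((hη x).mul_const _).add (((integrable_const 1).sub (hη x)).mul_const _)]
  refine Finset.sum_congr rfl fun x _ => ?_
  calc ∫ ω, η x ω * A x + (1 - η x ω) * B x ∂P
        = ∫ ω, (A x - B x) * η x ω + B x ∂P := by congr 1; funext ω; ring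
    _ = P[η x] * A x + (1 - P[η x]) * B x := by
        rw [integral_add ((hη x).const_mul _) (integrable_const _), integral_const_mul,
          integral_const, probReal_univ, one_smul]
        ring

lemma variance_sum_mul_add_one_sub_mul [IsProbabilityMeasure P] (hη : ∀ x, MemLp (η x) 2 P)
    (hind : iIndepFun η P) (A B : ι → ℝ) :
    Var[fun ω => ∑ x, (η x ω * A x + (1 - η x ω) * B x); P]
      = ∑ x, (A x - B x) ^ 2 * Var[η x; P] := by
  set f : ι → ℝ → ℝ := fun x y => (A x - B x) * y + B x
  have hY : (fun ω => ∑ x, (η x ω * A x + (1 - η x ω) * B x)) = ∑ x, f x ∘ η x := by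
    funext ω
    simp only [Finset.sum_apply, Function.comp_apply, f]
    exact Finset.sum_congr rfl fun x _ => by ring
  have hYL : ∀ x ∈ (Finset.univ : Finset ι), MemLp (f x ∘ η x) 2 P := fun x _ =>
    ((hη x).const_mul _).add (memLp_const _)
  have hindY := hind.comp f fun x => (measurable_id.const_mul _).add_const _
  rw [hY, IndepFun.variance_sum hYL fun i _ j _ hij => hindY.indepFun hij]
  refine Finset.sum_congr rfl fun x _ => ?_
  simp only [Function.comp_def, f]
  rw [variance_add_const ((hη x).aestronglyMeasurable.const_mul _), variance_const_mul]

end IndependentSum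

lemma tendsto_measure_abs_sub_ge_of_tendsto_variance {Ω α : Type*} [MeasurableSpace Ω]
    {P : Measure Ω} [IsFiniteMeasure P] {l : Filter α} {X : α → Ω → ℝ} {m ε : ℝ}
    (hX : ∀ᶠ i in l, MemLp (X i) 2 P) (hmean : Tendsto (fun i => P[X i]) l (𝓝 m))
    (hvar : Tendsto (fun i => Var[X i; P]) l (𝓝 0)) (hε : 0 < ε) :
    Tendsto (fun i => P {ω | ε ≤ |X i ω - m|}) l (𝓝 0) := by
  have hbound : Tendsto (fun i => ENNReal.ofReal (Var[X i; P] / (ε / 2) ^ 2)) l (𝓝 0) := by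
    simpa using ENNReal.tendsto_ofReal (hvar.div_const ((ε / 2) ^ 2))
  refine tendsto_of_tendsto_of_tendsto_of_le_of_le' tendsto_const_nhds hbound
    (.of_forall fun _ => zero_le) ?_
  have hclose : ∀ᶠ i in l, |P[X i] - m| < ε / 2 := by
    simpa [Real.dist_eq] using Metric.tendsto_nhds.mp hmean (ε / 2) (by linarith)
  filter_upwards [hX, hclose] with i hXi hi
  calc P {ω | ε ≤ |X i ω - m|} ≤ P {ω | ε / 2 ≤ |X i ω - P[X i]|} := by
        refine measure_mono fun ω (hω : ε ≤ _) => ?_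
        show ε / 2 ≤ _
        linarith [abs_sub_le (X i ω) P[X i] m]
    _ ≤ _ := meas_ge_le_variance_div_sq hXi (by linarith)

section RiemannSum

variable {f : ℝ → ℝ}

lemma abs_riemann_sum_sub_integral_le {N : ℕ} (hN : 0 < N) (hf : ContinuousOn f (Icc 0 1))
    {ε : ℝ}
    (hε : ∀ u ∈ Icc (0 : ℝ) 1, ∀ v ∈ Icc (0 : ℝ) 1, |u - v| ≤ 1 / N → |f u - f v| ≤ ε) :
    |(∑ x : Fin N, f (x / N)) / N - ∫ u in (0 : ℝ)..1, f u| ≤ ε := by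
  have hN' : (0 : ℝ) < N := Nat.cast_pos.mpr hN
  set a : ℕ → ℝ := fun k => k / N
  have hstep : ∀ k, a (k + 1) - a k = 1 / N := fun k => by simp only [a]; push_cast; ring
  have hcell : ∀ k < N, Icc (a k) (a (k + 1)) ⊆ Icc 0 1 := fun k hk =>
    Icc_subset_Icc (by positivity) <| by
      simp only [a]; rw [div_le_one hN']; exact_mod_cast hk
  have hle : ∀ k, a k ≤ a (k + 1) := fun k => by linarith [hstep k, one_div_pos.mpr hN']
  have hint :
      ∫ u in (0 : ℝ)..1, f u = ∑ k ∈ Finset.range N, ∫ u in a k..a (k + 1), f u := by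
    rw [intervalIntegral.sum_integral_adjacent_intervals fun k hk =>
      (hf.mono (hcell k hk)).intervalIntegrable_of_Icc (hle k)]
    simp [a, hN'.ne']
  have hsum : (∑ x : Fin N, f (x / N)) / N
      = ∑ k ∈ Finset.range N, ∫ _ in a k..a (k + 1), f (a k) := by
    rw [Fin.sum_univ_eq_sum_range (fun k => f (k / N)), Finset.sum_div]
    refine Finset.sum_congr rfl fun k _ => ?_
    rw [intervalIntegral.integral_const, hstep, smul_eq_mul]
    ring
  have hcell_le : ∀ k < N,
      |(∫ _ in a k..a (k + 1), f (a k)) - ∫ u in a k..a (k + 1), f u| ≤ ε / N := by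
    intro k hk
    have hfk := hf.mono (hcell k hk)
    rw [← intervalIntegral.integral_sub intervalIntegrable_const
      (hfk.intervalIntegrable_of_Icc (hle k))]
    have hbound : ∀ u ∈ uIoc (a k) (a (k + 1)), ‖f (a k) - f u‖ ≤ ε := by
      intro u hu
      rw [uIoc_of_le (hle k)] at hu
      have hk0 := hcell k hk ⟨le_rfl, hle k⟩
      have hu0 := hcell k hk (Ioc_subset_Icc_self hu)
      refine hε _ hk0 _ hu0 ?_
      rw [abs_sub_comm, abs_of_nonneg (by linarith [hu.1]), ← hstep k]
      linarith [hu.2]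
    refine (intervalIntegral.norm_integral_le_of_norm_le_const hbound).trans_eq ?_
    rw [abs_of_nonneg (sub_nonneg.mpr (hle k)), hstep]
    ring
  rw [hint, hsum, ← Finset.sum_sub_distrib]
  calc |∑ k ∈ Finset.range N, ((∫ _ in a k..a (k + 1), f (a k)) - ∫ u in a k..a (k + 1), f u)|
      ≤ ∑ k ∈ Finset.range N, |(∫ _ in a k..a (k + 1), f (a k)) - ∫ u in a k..a (k + 1), f u| :=
        Finset.abs_sum_le_sum_abs _ _
    _ ≤ ∑ _k ∈ Finset.range N, ε / N :=
        Finset.sum_le_sum fun k hk => hcell_le k (Finset.mem_range.mp hk)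
    _ = ε := by rw [Finset.sum_const, Finset.card_range, nsmul_eq_mul]; field_simp

lemma tendsto_riemann_sum (hf : ContinuousOn f (Icc 0 1)) :
    Tendsto (fun N : ℕ => (∑ x : Fin N, f (x / N)) / N) atTop
      (𝓝 (∫ u in (0 : ℝ)..1, f u)) := by
  rw [Metric.tendsto_atTop]
  intro ε hε
  obtain ⟨δ, hδ, hfδ⟩ := Metric.uniformContinuousOn_iff.mp
    (isCompact_Icc.uniformContinuousOn_of_continuous hf) (ε / 2) (half_pos hε)
  obtain ⟨N₀, hN₀⟩ := exists_nat_gt (1 / δ)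
  refine ⟨N₀ + 1, fun N hN => ?_⟩
  have hN' : (N₀ : ℝ) + 1 ≤ N := by exact_mod_cast hN
  have hmesh : 1 / (N : ℝ) < δ := by
    rw [div_lt_iff₀ (by linarith [N₀.cast_nonneg (α := ℝ)])]
    rw [div_lt_iff₀ hδ] at hN₀
    nlinarith
  rw [Real.dist_eq]
  refine (abs_riemann_sum_sub_integral_le (by omega) hf fun u hu v hv huv => ?_).trans_lt
    (half_lt_self hε)
  exact (hfδ u hu v hv ((Real.dist_eq u v).trans_le huv |>.trans_lt hmesh)).le

end RiemannSum

lemma IsCompact.exists_pos_forall_le_and_le_one_sub {X : Type*} [TopologicalSpace X]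
    {s : Set X} (hs : IsCompact s) {φ : X → ℝ} (hφ : ContinuousOn φ s)
    (h01 : ∀ u ∈ s, φ u ∈ Ioo 0 1) :
    ∃ c > 0, ∀ u ∈ s, c ≤ φ u ∧ c ≤ 1 - φ u := by
  obtain ⟨c, hc, h⟩ := hs.exists_forall_le' (hφ.inf (continuousOn_const.sub hφ)) (a := 0)
    fun u hu => lt_min (h01 u hu).1 (sub_pos.2 (h01 u hu).2)
  exact ⟨c, hc, fun u hu => le_min_iff.mp (h u hu)⟩

lemma abs_mul_le_mul_of_abs_le {α h M : ℝ} (hα : 0 ≤ α) (hh : |h| ≤ M) :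
    |α * h| ≤ α * M := by
  rw [abs_mul, abs_of_nonneg hα]
  exact mul_le_mul_of_nonneg_left hh hα

section SiteSums

variable {ι : Type*} [Fintype ι] {p h : ι → ℝ} {c M α : ℝ}

lemma abs_sum_bernoulli_log_ratio_mean_add_le (hc : 0 < c) (hp : ∀ x, c ≤ p x ∧ c ≤ 1 - p x)
    (hh : ∀ x, |h x| ≤ M) (hα : 0 ≤ α) (hαM : α * M ≤ c / 2) :
    |∑ x, ((p x + α * h x) * log (p x / (p x + α * h x))
        + (1 - (p x + α * h x)) * log ((1 - p x) / (1 - p x - α * h x)))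
      + α ^ 2 / 2 * ∑ x, h x ^ 2 / (p x * (1 - p x))|
      ≤ Fintype.card ι * (8 / c ^ 2 * (α * M) ^ 3) := by
  rw [Finset.mul_sum, ← Finset.sum_add_distrib]
  refine (Finset.abs_sum_le_sum_abs _ _).trans ?_
  refine (Finset.sum_le_card_nsmul _ _ _ fun x _ => ?_).trans_eq (nsmul_eq_mul _ _)
  have ht := abs_mul_le_mul_of_abs_le hα (hh x)
  calc _ = |(p x + α * h x) * log (p x / (p x + α * h x))
          + (1 - (p x + α * h x)) * log ((1 - p x) / (1 - p x - α * h x))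
          + (α * h x) ^ 2 / (2 * (p x * (1 - p x)))| := by rw [mul_pow, div_mul_div_comm]
    _ ≤ 8 / c ^ 2 * |α * h x| ^ 3 :=
        abs_bernoulli_log_ratio_mean_add_le hc (hp x).1 (hp x).2 (ht.trans hαM)
    _ ≤ 8 / c ^ 2 * (α * M) ^ 3 := by gcongr

lemma sum_sq_log_ratio_sub_le (hc : 0 < c) (hp : ∀ x, c ≤ p x ∧ c ≤ 1 - p x)
    (hh : ∀ x, |h x| ≤ M) (hα : 0 ≤ α) (hαM : α * M ≤ c / 2) :
    ∑ x, (log (p x / (p x + α * h x)) - log ((1 - p x) / (1 - p x - α * h x))) ^ 2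
      ≤ Fintype.card ι * (4 / c * (α * M)) ^ 2 := by
  refine (Finset.sum_le_card_nsmul _ _ _ fun x _ => ?_).trans_eq (nsmul_eq_mul _ _)
  have ht := abs_mul_le_mul_of_abs_le hα (hh x)
  rw [← sq_abs]
  gcongr
  exact (abs_log_div_add_sub_log_div_sub_le hc (hp x).1 (hp x).2 (ht.trans hαM)).trans
    (by gcongr)

end SiteSums

lemma Fin.cast_div_mem_Icc {N : ℕ} (x : Fin N) : (x : ℝ) / N ∈ Icc (0 : ℝ) 1 :=
  ⟨by positivity, div_le_one_of_le₀ (by exact_mod_cast x.isLt.le) (Nat.cast_nonneg N)⟩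

section Asymptotics

variable {φ g : ℝ → ℝ} {a : ℕ → ℝ} {c M : ℝ}

lemma tendsto_scaled_sum_bernoulli_log_ratio_mean (hc : 0 < c)
    (hφ : ∀ u ∈ Icc (0 : ℝ) 1, c ≤ φ u ∧ c ≤ 1 - φ u)
    (hg : ∀ u ∈ Icc (0 : ℝ) 1, |g u| ≤ M)
    (hφc : ContinuousOn φ (Icc 0 1)) (hgc : ContinuousOn g (Icc 0 1)) (ha : ∀ N, 0 < a N)
    (ha1 : Tendsto (fun N : ℕ => a N / N) atTop (𝓝 0))
    (hreg : ∀ᶠ N : ℕ in atTop, a N / N * M ≤ c / 2) :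
    Tendsto (fun N : ℕ => N / a N ^ 2 * ∑ x : Fin N,
        ((φ (x / N) + a N / N * g (x / N)) * log (φ (x / N) / (φ (x / N) + a N / N * g (x / N)))
          + (1 - (φ (x / N) + a N / N * g (x / N)))
            * log ((1 - φ (x / N)) / (1 - φ (x / N) - a N / N * g (x / N)))))
      atTop (𝓝 (-(1 / 2) * ∫ u in (0 : ℝ)..1, g u ^ 2 / (φ u * (1 - φ u)))) := by
  have hF : ContinuousOn (fun u => g u ^ 2 / (φ u * (1 - φ u))) (Icc 0 1) :=
    (hgc.pow 2).div (hφc.mul (continuousOn_const.sub hφc)) fun u hu =>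
      (mul_pos (hc.trans_le (hφ u hu).1) (hc.trans_le (hφ u hu).2)).ne'
  have herr : ∀ᶠ N : ℕ in atTop, ‖N / a N ^ 2 * ∑ x : Fin N,
        ((φ (x / N) + a N / N * g (x / N)) * log (φ (x / N) / (φ (x / N) + a N / N * g (x / N)))
          + (1 - (φ (x / N) + a N / N * g (x / N)))
            * log ((1 - φ (x / N)) / (1 - φ (x / N) - a N / N * g (x / N))))
        + 1 / 2 * ((∑ x : Fin N, g (x / N) ^ 2 / (φ (x / N) * (1 - φ (x / N)))) / N)‖
      ≤ 8 * M ^ 3 / c ^ 2 * (a N / N) := by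
    filter_upwards [hreg, eventually_gt_atTop 0] with N hN hN0
    have hN' : (0 : ℝ) < N := Nat.cast_pos.mpr hN0
    have hsum := abs_sum_bernoulli_log_ratio_mean_add_le (p := fun x : Fin N => φ (x / N))
      (h := fun x : Fin N => g (x / N)) hc (fun x => hφ _ x.cast_div_mem_Icc)
      (fun x => hg _ x.cast_div_mem_Icc) (div_pos (ha N) hN').le hN
    rw [Fintype.card_fin] at hsum
    set L := ∑ x : Fin N,
        ((φ (x / N) + a N / N * g (x / N)) * log (φ (x / N) / (φ (x / N) + a N / N * g (x / N)))
          + (1 - (φ (x / N) + a N / N * g (x / N)))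
            * log ((1 - φ (x / N)) / (1 - φ (x / N) - a N / N * g (x / N))))
    set F := ∑ x : Fin N, g (x / N) ^ 2 / (φ (x / N) * (1 - φ (x / N)))
    have hscale : (0 : ℝ) < N / a N ^ 2 := div_pos hN' (pow_pos (ha N) 2)
    have haN := (ha N).ne'
    calc ‖N / a N ^ 2 * L + 1 / 2 * (F / N)‖ = |N / a N ^ 2 * (L + (a N / N) ^ 2 / 2 * F)| := by
          rw [Real.norm_eq_abs]
          congr 1
          field_simp
      _ = N / a N ^ 2 * |L + (a N / N) ^ 2 / 2 * F| := by rw [abs_mul, abs_of_pos hscale]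
      _ ≤ N / a N ^ 2 * (N * (8 / c ^ 2 * (a N / N * M) ^ 3)) := by gcongr
      _ = 8 * M ^ 3 / c ^ 2 * (a N / N) := by field_simp
  have herr0 := squeeze_zero_norm' herr (by simpa using ha1.const_mul (8 * M ^ 3 / c ^ 2))
  have hlim := herr0.sub ((tendsto_riemann_sum hF).const_mul (1 / 2))
  rw [zero_sub, ← neg_mul] at hlim
  exact hlim.congr fun N => add_sub_cancel_right _ _

lemma tendsto_scaled_sum_sq_log_ratio_sub (hc : 0 < c)
    (hφ : ∀ u ∈ Icc (0 : ℝ) 1, c ≤ φ u ∧ c ≤ 1 - φ u)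
    (hg : ∀ u ∈ Icc (0 : ℝ) 1, |g u| ≤ M)
    (ha : ∀ N, 0 < a N) (ha2 : Tendsto (fun N : ℕ => √N / a N) atTop (𝓝 0))
    (hreg : ∀ᶠ N : ℕ in atTop, a N / N * M ≤ c / 2) :
    Tendsto (fun N : ℕ => (N / a N ^ 2) ^ 2 * ∑ x : Fin N,
        (log (φ (x / N) / (φ (x / N) + a N / N * g (x / N)))
          - log ((1 - φ (x / N)) / (1 - φ (x / N) - a N / N * g (x / N)))) ^ 2)
      atTop (𝓝 0) := by
  refine squeeze_zero' (.of_forall fun N => by positivity) ?_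
    (by simpa using (ha2.pow 2).const_mul (16 * M ^ 2 / c ^ 2))
  filter_upwards [hreg, eventually_gt_atTop 0] with N hN hN0
  have hN' : (0 : ℝ) < N := Nat.cast_pos.mpr hN0
  have haN := (ha N).ne'
  have hsum := sum_sq_log_ratio_sub_le (p := fun x : Fin N => φ (x / N))
    (h := fun x : Fin N => g (x / N)) hc (fun x => hφ _ x.cast_div_mem_Icc)
    (fun x => hg _ x.cast_div_mem_Icc) (div_pos (ha N) hN').le hN
  rw [Fintype.card_fin] at hsum
  calc _ ≤ (N / a N ^ 2) ^ 2 * (N * (4 / c * (a N / N * M)) ^ 2) := by gcongr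
    _ = 16 * M ^ 2 / c ^ 2 * (√N / a N) ^ 2 := by
        rw [div_pow √(N : ℝ), sq_sqrt hN'.le]
        field_simp
        ring

end Asymptotics

theorem loglikelihood_ratio_convergence_general
    {Ω : Type*} [MeasurableSpace Ω] (P : Measure Ω) [IsProbabilityMeasure P]
    (a : ℕ → ℝ) (ha : ∀ N, 0 < a N)
    (ha1 : Tendsto (fun N : ℕ => a N / (N : ℝ)) atTop (nhds 0))
    (ha2 : Tendsto (fun N : ℕ => Real.sqrt N / a N) atTop (nhds 0))
    (φ g : ℝ → ℝ) (hφc : Continuous φ)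
    (hφ : ∀ u, φ u ∈ Set.Ioo (0 : ℝ) 1) (hgc : Continuous g)
    (η : (N : ℕ) → Fin N → Ω → ℝ)
    (hmeas : ∀ N x, Measurable (η N x))
    (hval : ∀ N x ω, η N x ω = 0 ∨ η N x ω = 1)
    (hind : ∀ N, iIndepFun (η N) P)
    (hmarg : ∀ N (x : Fin N),
      φ (x / N) + a N / N * g (x / N) ∈ Set.Ioo (0 : ℝ) 1 →
      P {ω | η N x ω = 1} = ENNReal.ofReal (φ (x / N) + a N / N * g (x / N)))
    (R : (N : ℕ) → Ω → ℝ)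
    (hR : ∀ N ω, R N ω = ∑ x : Fin N,
      (η N x ω * Real.log (φ (x / N) / (φ (x / N) + a N / N * g (x / N)))
        + (1 - η N x ω)
          * Real.log ((1 - φ (x / N)) / (1 - φ (x / N) - a N / N * g (x / N))))) :
    ∀ ε > (0 : ℝ),
      Tendsto (fun N : ℕ =>
          P {ω | ε ≤ |((N : ℝ) / (a N) ^ 2) * R N ω
            - (-(1 / 2) * ∫ u in (0:ℝ)..1, g u ^ 2 / (φ u * (1 - φ u)))|})
        atTop (nhds 0) := by
  intro ε hε
  obtain ⟨c, hc, hcφ⟩ :=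
    isCompact_Icc.exists_pos_forall_le_and_le_one_sub hφc.continuousOn fun u _ => hφ u
  obtain ⟨M, hM⟩ := isCompact_Icc.exists_bound_of_continuousOn hgc.continuousOn
  simp only [Real.norm_eq_abs] at hM
  have hreg : ∀ᶠ N : ℕ in atTop, a N / N * M ≤ c / 2 :=
    ((ha1.mul_const M).eventually_lt_const (by simpa using half_pos hc)).mono fun _ h => h.le
  have hηL : ∀ N x, MemLp (η N x) 2 P := fun N x =>
    memLp_of_eq_zero_or_one (hmeas N x) (hval N x)
  have hRsum := fun N => funext (hR N)
  refine tendsto_measure_abs_sub_ge_of_tendsto_variance (.of_forall fun N => ?_) ?_ ?_ hε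
  · rw [hRsum]
    exact (memLp_sum_mul_add_one_sub_mul (hηL N) _ _).const_mul _
  · refine (tendsto_scaled_sum_bernoulli_log_ratio_mean hc hcφ hM hφc.continuousOn
      hgc.continuousOn ha ha1 hreg).congr' ?_
    filter_upwards [hreg] with N hN
    rw [integral_const_mul, hRsum,
      integral_sum_mul_add_one_sub_mul fun x => (hηL N x).integrable one_le_two]
    congr 1
    refine Finset.sum_congr rfl fun x _ => ?_
    have ht := abs_mul_le_mul_of_abs_le (div_nonneg (ha N).le N.cast_nonneg)
      (hM _ x.cast_div_mem_Icc)
    have hp := add_mem_Ioo_of_abs_le hc (hcφ _ x.cast_div_mem_Icc).1 (hcφ _ x.cast_div_mem_Icc).2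
      (ht.trans hN)
    rw [integral_eq_of_eq_zero_or_one (hmeas N x) (hval N x) hp.1.le (hmarg N x hp)]
  · refine squeeze_zero' (.of_forall fun N => variance_nonneg _ _) (.of_forall fun N => ?_)
      (tendsto_scaled_sum_sq_log_ratio_sub hc hcφ hM ha ha2 hreg)
    rw [hRsum, variance_const_mul, variance_sum_mul_add_one_sub_mul (hηL N) (hind N)]
    gcongr with x
    exact mul_le_of_le_one_right (sq_nonneg _)
      ((variance_le_of_eq_zero_or_one (hmeas N x) (hval N x)).trans (by norm_num))

/-- convergence in probability of the scaled log-likelihood ratio between the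
Bernoulli product measures with success probabilities `φ(x/N)` and
`φ(x/N) + (a_N/N) g(x/N)`, sampled under the perturbed measure:
`(N/a_N²) R_N → -½ ∫ g²/(φ(1-φ))` in probability. -/
theorem loglikelihood_ratio_convergence
    {Ω : Type*} [MeasurableSpace Ω] (P : Measure Ω) [IsProbabilityMeasure P]
    (a : ℕ → ℝ) (ha : ∀ N, 0 < a N)
    (ha1 : Tendsto (fun N : ℕ => a N / (N : ℝ)) atTop (nhds 0))
    (ha2 : Tendsto (fun N : ℕ => Real.sqrt N / a N) atTop (nhds 0))
    (φ g : ℝ → ℝ) (hφc : Continuous φ) (hφp : Function.Periodic φ 1)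
    (hφ : ∀ u, φ u ∈ Set.Ioo (0 : ℝ) 1) (hgc : Continuous g) (hgp : Function.Periodic g 1)
    (η : (N : ℕ) → Fin N → Ω → ℝ)
    (hmeas : ∀ N x, Measurable (η N x))
    (hval : ∀ N x ω, η N x ω = 0 ∨ η N x ω = 1)
    (hind : ∀ N, iIndepFun (η N) P)
    (hmarg : ∀ N (x : Fin N),
      φ (x / N) + a N / N * g (x / N) ∈ Set.Ioo (0 : ℝ) 1 →
      P {ω | η N x ω = 1} = ENNReal.ofReal (φ (x / N) + a N / N * g (x / N)))
    (R : (N : ℕ) → Ω → ℝ)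
    (hR : ∀ N ω, R N ω = ∑ x : Fin N,
      (η N x ω * Real.log (φ (x / N) / (φ (x / N) + a N / N * g (x / N)))
        + (1 - η N x ω)
          * Real.log ((1 - φ (x / N)) / (1 - φ (x / N) - a N / N * g (x / N))))) :
    ∀ ε > (0 : ℝ),
      Tendsto (fun N : ℕ =>
          P {ω | ε ≤ |((N : ℝ) / (a N) ^ 2) * R N ω
            - (-(1 / 2) * ∫ u in (0:ℝ)..1, g u ^ 2 / (φ u * (1 - φ u)))|})
        atTop (nhds 0) :=
  loglikelihood_ratio_convergence_general P a ha ha1 ha2 φ g hφc hφ hgc η hmeas hval hind hmarg R hR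
end
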